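/- arXiv:2007.06248 — 6 statements merged into one kernel-verified Lean document; each statement's English description precedes it below -/
import Mathlib

section
/- Monotonicity of guards: Let TA be a threshold automaton and let σ₀, r₁, σ₁, …, r_k, σ_k be a finite path of TA. Then for all 0 ≤ i ≤ j ≤ k we have ω(σ_i) ⊆ ω(σ_j); in particular, every rise guard of TA that is true in σ_i is true in σ_j, and every fall guard of TA that is false in σ_i is false in σ_j. -/
/-!
Threshold automata (Konnov, Veith, Widder), following
"Complexity of Verification and Synthesis of Threshold Automata".
-/

/-- A threshold guard `x ⋈ a₀ + a₁·p₁ + … + a_{|Π|}·p_{|Π|}` over shared variables `V` and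
parameters `P`.  `isRise = true` means a *rise* guard `x ≥ …`, and `isRise = false` means a
*fall* guard `x < …`. -/
structure TGuard (V P : Type) where
  var : V
  isRise : Bool
  a0 : ℚ
  coef : P → ℚ

/-- A configuration `σ = (κ, g, p)`: numbers of processes in each location, values of the
shared variables, and values of the parameters. -/
structure Config (L V P : Type) where
  κ : L → ℕ
  g : V → ℕ
  p : P → ℕ

/-- A rule of a threshold automaton: source and target locations, a guard that is a
(finite) conjunction of threshold guards, and an update `V → {0,1}`. -/
structure TRule (L V P : Type) where
  src : L
  dst : L
  guard : List (TGuard V P)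
  upd : V → ℕ
  upd_le_one : ∀ v, upd v ≤ 1

/-- A threshold automaton `(L, I, Γ, R)` together with its environment `(Π, RC, N)`.
`L`, `V`, `P` are the types of locations, shared variables and parameters, and `R` is the
index type of rules. -/
structure TA (L V P R : Type) where
  initial : Set L
  initial_nonempty : initial.Nonempty
  rc : Set (P → ℕ)
  N : (P → ℕ) → ℕ
  rule : R → TRule L V P

variable {L V P R : Type}

/-- Satisfaction of a threshold guard by values `g` of the shared variables and `p` of the
parameters. -/
def TGuard.holds [Fintype P] (φ : TGuard V P) (g : V → ℕ) (p : P → ℕ) : Prop :=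
  if φ.isRise then φ.a0 + ∑ i : P, φ.coef i * (p i : ℚ) ≤ (g φ.var : ℚ)
  else (g φ.var : ℚ) < φ.a0 + ∑ i : P, φ.coef i * (p i : ℚ)

/-- A configuration enables a rule. -/
def TRule.enabledAt [Fintype P] (r : TRule L V P) (σ : Config L V P) : Prop :=
  0 < σ.κ r.src ∧ ∀ φ ∈ r.guard, φ.holds σ.g σ.p

/-- The result of firing a rule at a configuration. -/
def TRule.fire [DecidableEq L] (r : TRule L V P) (σ : Config L V P) : Config L V P where
  κ := fun ℓ => σ.κ ℓ + (if ℓ = r.dst then 1 else 0) - (if ℓ = r.src then 1 else 0)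
  g := fun v => σ.g v + r.upd v
  p := σ.p

namespace TA

variable [Fintype P] [DecidableEq L]

/-- `σ` is a configuration of `ta`: the parameters satisfy the resilience condition and the
total number of processes is `N(p)`. -/
def validConfig [Fintype L] (ta : TA L V P R) (σ : Config L V P) : Prop :=
  σ.p ∈ ta.rc ∧ ∑ ℓ : L, σ.κ ℓ = ta.N σ.p

/-- Initial configurations. -/
def isInitial [Fintype L] (ta : TA L V P R) (σ : Config L V P) : Prop :=
  ta.validConfig σ ∧ (∀ ℓ, ℓ ∉ ta.initial → σ.κ ℓ = 0) ∧ ∀ v, σ.g v = 0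

/-- A schedule (finite sequence of rules) is applicable to a configuration. -/
def applicable (ta : TA L V P R) : Config L V P → List R → Prop
  | _, [] => True
  | σ, r :: τ => (ta.rule r).enabledAt σ ∧ ta.applicable ((ta.rule r).fire σ) τ

/-- The configuration `τ(σ)` resulting from applying a schedule. -/
def apply (ta : TA L V P R) : Config L V P → List R → Config L V P
  | σ, [] => σ
  | σ, r :: τ => ta.apply ((ta.rule r).fire σ) τ

/-- The configurations visited by the path from `σ` along `τ` (including both endpoints). -/
def visited (ta : TA L V P R) : Config L V P → List R → List (Config L V P)
  | σ, [] => [σ]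
  | σ, r :: τ => σ :: ta.visited ((ta.rule r).fire σ) τ

/-- Reachability `σ →* σ'`. -/
def reaches (ta : TA L V P R) (σ σ' : Config L V P) : Prop :=
  ∃ τ : List R, ta.applicable σ τ ∧ ta.apply σ τ = σ'

/-- The set of all threshold guards occurring in rules of the automaton. -/
def guards (ta : TA L V P R) : Set (TGuard V P) :=
  {φ | ∃ r : R, φ ∈ (ta.rule r).guard}

/-- The context `ω(σ)`: rise guards of `ta` that are true in `σ` together with fall guards
of `ta` that are false in `σ`. -/
def context (ta : TA L V P R) (σ : Config L V P) : Set (TGuard V P) :=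
  {φ | φ ∈ ta.guards ∧ if φ.isRise then φ.holds σ.g σ.p else ¬ φ.holds σ.g σ.p}

/-- A schedule applicable at `σ` is steady if all configurations visited by the
corresponding path have the same context. -/
def steady (ta : TA L V P R) (σ : Config L V P) (τ : List R) : Prop :=
  ∀ σ' ∈ ta.visited σ τ, ta.context σ' = ta.context σ

end TA

lemma visited_ge_head [Fintype P] [DecidableEq L] (ta : TA L V P R) :
    ∀ (τ : List R) (σ : Config L V P) (j : ℕ) (hj : j < (ta.visited σ τ).length),
      (∀ v, σ.g v ≤ ((ta.visited σ τ)[j]'hj).g v) ∧ σ.p = ((ta.visited σ τ)[j]'hj).p := by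
  intro τ
  induction τ with
  | nil =>
    intro σ j hj
    simp [TA.visited] at hj
    subst hj
    simp [TA.visited]
  | cons r τ ih =>
    intro σ j hj
    match j with
    | 0 => simp [TA.visited]
    | j + 1 =>
      simp only [TA.visited, List.length_cons, Nat.add_lt_add_iff_right] at hj
      have h := ih ((ta.rule r).fire σ) j hj
      refine ⟨fun v => le_trans (Nat.le_add_right _ _) (h.1 v), h.2⟩

lemma visited_mono [Fintype P] [DecidableEq L] (ta : TA L V P R) :
    ∀ (τ : List R) (σ : Config L V P) (i j : ℕ) (hi : i < (ta.visited σ τ).length)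
      (hj : j < (ta.visited σ τ).length), i ≤ j →
      (∀ v, ((ta.visited σ τ)[i]'hi).g v ≤ ((ta.visited σ τ)[j]'hj).g v) ∧
      ((ta.visited σ τ)[i]'hi).p = ((ta.visited σ τ)[j]'hj).p := by
  intro τ
  induction τ with
  | nil =>
    intro σ i j hi hj hij
    simp [TA.visited] at hi hj
    subst hi; subst hj
    simp
  | cons r τ ih =>
    intro σ i j hi hj hij
    match i with
    | 0 =>
      have := visited_ge_head ta (r :: τ) σ j hj
      simpa [TA.visited] using this
    | i + 1 =>
      match j with
      | 0 => omega
      | j + 1 =>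
        simp only [TA.visited, List.length_cons, Nat.add_lt_add_iff_right] at hi hj
        exact ih ((ta.rule r).fire σ) i j hi hj (by omega)

/-- **Monotonicity of guards.**  Along any finite path of a threshold automaton the contexts
are monotonically increasing: for positions `i ≤ j` of the path we have `ω(σᵢ) ⊆ ω(σⱼ)`; in
particular every rise guard of `TA` that is true at position `i` is true at position `j`,
and every fall guard of `TA` that is false at position `i` is false at position `j`. -/
theorem monotonicity_of_guards [Fintype P] [DecidableEq L]
    (ta : TA L V P R) (σ : Config L V P) (τ : List R)
    (happ : ta.applicable σ τ) :
    ∀ (i j : ℕ) (hi : i < (ta.visited σ τ).length) (hj : j < (ta.visited σ τ).length),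
      i ≤ j →
      ta.context ((ta.visited σ τ)[i]'hi) ⊆ ta.context ((ta.visited σ τ)[j]'hj) ∧
      ∀ φ ∈ ta.guards,
        (φ.isRise = true →
          φ.holds ((ta.visited σ τ)[i]'hi).g ((ta.visited σ τ)[i]'hi).p →
          φ.holds ((ta.visited σ τ)[j]'hj).g ((ta.visited σ τ)[j]'hj).p) ∧
        (φ.isRise = false →
          ¬ φ.holds ((ta.visited σ τ)[i]'hi).g ((ta.visited σ τ)[i]'hi).p →
          ¬ φ.holds ((ta.visited σ τ)[j]'hj).g ((ta.visited σ τ)[j]'hj).p) := by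
  intro i j hi hj hij
  obtain ⟨hg, hp⟩ := visited_mono ta τ σ i j hi hj hij
  set σi := (ta.visited σ τ)[i]'hi
  set σj := (ta.visited σ τ)[j]'hj
  have hgcast : ∀ v, (σi.g v : ℚ) ≤ (σj.g v : ℚ) := fun v => by exact_mod_cast hg v
  have hrise : ∀ φ : TGuard V P, φ.isRise = true → φ.holds σi.g σi.p → φ.holds σj.g σj.p := by
    intro φ h hold
    simp only [TGuard.holds, h, if_true, ← hp] at hold ⊢
    exact le_trans hold (hgcast _)
  have hfall : ∀ φ : TGuard V P, φ.isRise = false →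
      ¬ φ.holds σi.g σi.p → ¬ φ.holds σj.g σj.p := by
    intro φ h hold
    simp only [TGuard.holds, h, Bool.false_eq_true, if_false, not_lt, ← hp] at hold ⊢
    exact le_trans hold (hgcast _)
  constructor
  · intro φ hφ
    obtain ⟨hφg, hφc⟩ := hφ
    refine ⟨hφg, ?_⟩
    cases h : φ.isRise with
    | true => simp only [h, if_true] at hφc ⊢; exact hrise φ h hφc
    | false => simp only [h, Bool.false_eq_true, if_false] at hφc ⊢; exact hfall φ h hφc
  · intro φ _
    exact ⟨hrise φ, hfall φ⟩
end

section
/- A finite path of a threshold automaton is steady if and only if its endpoints have the same context: for every configuration σ and every schedule τ applicable to σ, all configurations visited by the path from σ along τ have the same context if and only if ω(σ) = ω(τ(σ)). -/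
variable {L V P R : Type}

/-!
Firing rules never changes the parameters and never decreases a shared variable, so along a
path the rise guards can only become true and the fall guards can only become false: the
context grows monotonically. A monotone sequence of sets with equal endpoints is constant.
-/

theorem TRule.g_le_fire [DecidableEq L] (r : TRule L V P) (σ : Config L V P) :
    σ.g ≤ (r.fire σ).g :=
  fun _ => Nat.le_add_right _ _

namespace TA

variable [DecidableEq L] (ta : TA L V P R)

theorem p_eq_of_mem_visited {σ σ' : Config L V P} {τ : List R} (h : σ' ∈ ta.visited σ τ) :
    σ.p = σ'.p := by
  induction τ generalizing σ with
  | nil => simp_all [visited]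
  | cons r τ ih =>
    rcases List.mem_cons.mp h with rfl | h
    · rfl
    · exact (ih h :)

theorem g_le_of_mem_visited {σ σ' : Config L V P} {τ : List R} (h : σ' ∈ ta.visited σ τ) :
    σ.g ≤ σ'.g := by
  induction τ generalizing σ with
  | nil => simp_all [visited]
  | cons r τ ih =>
    rcases List.mem_cons.mp h with rfl | h
    · rfl
    · exact ((ta.rule r).g_le_fire σ).trans (ih h)

theorem apply_mem_visited (σ : Config L V P) (τ : List R) : ta.apply σ τ ∈ ta.visited σ τ := by
  induction τ generalizing σ with
  | nil => simp [apply, visited]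
  | cons r τ ih => exact List.mem_cons_of_mem _ (ih _)

theorem exists_apply_eq_of_mem_visited {σ σ' : Config L V P} {τ : List R}
    (h : σ' ∈ ta.visited σ τ) : ∃ τ', ta.apply σ' τ' = ta.apply σ τ := by
  induction τ generalizing σ with
  | nil => exact ⟨[], by simp_all [visited, apply]⟩
  | cons r τ ih =>
    rcases List.mem_cons.mp h with rfl | h
    · exact ⟨r :: τ, rfl⟩
    · exact ih h

end TA

section

variable [Fintype P]

theorem TGuard.holds_mono_of_isRise {φ : TGuard V P} (hφ : φ.isRise) {g g' : V → ℕ}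
    (hg : g ≤ g') {p : P → ℕ} (h : φ.holds g p) : φ.holds g' p := by
  simp only [TGuard.holds, hφ, if_true] at h ⊢
  exact h.trans (by exact_mod_cast hg φ.var)

theorem TGuard.holds_antitone_of_not_isRise {φ : TGuard V P} (hφ : φ.isRise = false)
    {g g' : V → ℕ} (hg : g ≤ g') {p : P → ℕ} (h : φ.holds g' p) : φ.holds g p := by
  simp only [TGuard.holds, hφ] at h ⊢
  exact lt_of_le_of_lt (by exact_mod_cast hg φ.var) h

namespace TA

variable (ta : TA L V P R)

theorem context_mono {σ σ' : Config L V P} (hp : σ.p = σ'.p) (hg : σ.g ≤ σ'.g) :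
    ta.context σ ⊆ ta.context σ' := by
  rintro φ ⟨hmem, h⟩
  refine ⟨hmem, ?_⟩
  rw [← hp]
  cases hφ : φ.isRise
  · simp only [hφ] at h ⊢
    exact fun h' => h (TGuard.holds_antitone_of_not_isRise hφ hg h')
  · simp only [hφ, if_true] at h ⊢
    exact TGuard.holds_mono_of_isRise hφ hg h

theorem context_subset_of_mem_visited [DecidableEq L] {σ σ' : Config L V P} {τ : List R}
    (h : σ' ∈ ta.visited σ τ) : ta.context σ ⊆ ta.context σ' :=
  ta.context_mono (ta.p_eq_of_mem_visited h) (ta.g_le_of_mem_visited h)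

end TA

end

theorem steady_iff_same_context_at_endpoints_general [Fintype P] [DecidableEq L]
    (ta : TA L V P R) (σ : Config L V P) (τ : List R) :
    ta.steady σ τ ↔ ta.context σ = ta.context (ta.apply σ τ) := by
  refine ⟨fun hs => (hs _ (ta.apply_mem_visited σ τ)).symm, fun hend σ' hσ' => ?_⟩
  obtain ⟨τ', hτ'⟩ := ta.exists_apply_eq_of_mem_visited hσ'
  have hto_end : ta.context σ' ⊆ ta.context (ta.apply σ τ) :=
    hτ' ▸ ta.context_subset_of_mem_visited (ta.apply_mem_visited σ' τ')
  exact (hend ▸ hto_end).antisymm (ta.context_subset_of_mem_visited hσ')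

/-- A finite path of a threshold automaton is steady if and only if its endpoints have the
same context: for every configuration `σ` and schedule `τ` applicable to `σ`, all
configurations visited by the path from `σ` along `τ` have the same context iff
`ω(σ) = ω(τ(σ))`. -/
theorem steady_iff_same_context_at_endpoints [Fintype P] [DecidableEq L]
    (ta : TA L V P R) (σ : Config L V P) (τ : List R)
    (happ : ta.applicable σ τ) :
    ta.steady σ τ ↔ ta.context σ = ta.context (ta.apply σ τ) :=
  steady_iff_same_context_at_endpoints_general ta σ τ
end

section
/- Let TA be a threshold automaton and let σ, σ' be configurations of TA. There exists a steady schedule τ applicable to σ with τ(σ) = σ' if and only if some assignment y: R → ℕ witnesses steady reachability from σ to σ'. -/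
variable {L V P R : Type}

/-- There is a chain of rules, all fired at least once according to `y`, starting at a
location populated in `σ` and leading to the rule `r`. -/
def TA.chainTo [Fintype P] (ta : TA L V P R) (y : R → ℕ) (σ : Config L V P) (r : R) : Prop :=
  ∃ (c : List R) (hne : c ≠ []),
    (∀ r' ∈ c, 0 < y r') ∧
    0 < σ.κ (ta.rule (c.head hne)).src ∧
    List.Chain' (fun a b => (ta.rule a).dst = (ta.rule b).src) c ∧
    c.getLast hne = r

/-- The assignment `y : R → ℕ` witnesses steady reachability from `σ` to `σ'`. -/
def TA.witnessesSteady [Fintype P] [DecidableEq L] [Fintype R]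
    (ta : TA L V P R) (σ σ' : Config L V P) (y : R → ℕ) : Prop :=
  σ.p = σ'.p ∧
  ta.context σ = ta.context σ' ∧
  (∀ ℓ : L, (σ'.κ ℓ : ℤ) - (σ.κ ℓ : ℤ) =
      (∑ r : R, if (ta.rule r).dst = ℓ then (y r : ℤ) else 0) -
      (∑ r : R, if (ta.rule r).src = ℓ then (y r : ℤ) else 0)) ∧
  (∀ z : V, (σ'.g z : ℤ) - (σ.g z : ℤ) = ∑ r : R, (y r : ℤ) * ((ta.rule r).upd z : ℤ)) ∧
  (∀ r : R, 0 < y r → ∀ φ ∈ (ta.rule r).guard, φ.holds σ.g σ.p) ∧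
  (∀ r : R, 0 < y r → ta.chainTo y σ r)

/-!
Forward: counting the occurrences of each rule in a steady schedule gives a witness. The guards
of its rules hold at `σ` because all visited configurations share the context of `σ`, and each
rule fires from a location that was populated in `σ` or entered by an earlier rule.

Backward, by induction on `∑ r, y r`: fire a rule `e` with `y e > 0` whose source is populated
such that the chain condition survives for `y - 1_e`. Firing only increases shared variables, and
they stay below `σ'.g`; as rise guards are monotone and fall guards antitone in the shared
variables and `σ`, `σ'` have the same context, every intermediate configuration has it too.

Such an `e` exists by an Euler-type argument on the multigraph of rules weighted by `y`. Take any
`e` leaving a populated location `a`. If firing it cuts `a` off while rules still leave `a`, the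
locations cut off form a set into which no rule of `y - 1_e` leads and which is empty; by
conservation it is empty in `σ'` and no rule leads out of it either. Then firing another rule `g`
out of `a` instead keeps `a` reachable: otherwise the part of that set reached after firing `g`
would receive the flow along `g` without ever returning it.
-/

namespace TokenGraph

variable {L R : Type*} (src dst : R → L)

inductive Reachable (y : R → ℕ) (κ : L → ℕ) : L → Prop
  | base {ℓ : L} : 0 < κ ℓ → Reachable y κ ℓ
  | step {r : R} : Reachable y κ (src r) → 0 < y r → Reachable y κ (dst r)

def Rooted (y : R → ℕ) (κ : L → ℕ) : Prop :=
  ∀ r, 0 < y r → Reachable src dst y κ (src r)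

def move [DecidableEq L] (a b : L) (κ : L → ℕ) : L → ℕ :=
  fun ℓ => κ ℓ + (if ℓ = b then 1 else 0) - (if ℓ = a then 1 else 0)

def netFlow [DecidableEq L] [Fintype R] (y : R → ℕ) (ℓ : L) : ℤ :=
  (∑ r, if dst r = ℓ then (y r : ℤ) else 0) - ∑ r, if src r = ℓ then (y r : ℤ) else 0

def inflow [DecidableEq L] [Fintype R] (y : R → ℕ) (S : Finset L) : ℕ :=
  ∑ r, if dst r ∈ S ∧ src r ∉ S then y r else 0

def outflow [DecidableEq L] [Fintype R] (y : R → ℕ) (S : Finset L) : ℕ :=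
  ∑ r, if src r ∈ S ∧ dst r ∉ S then y r else 0

variable {src dst} {y : R → ℕ} {κ κ' : L → ℕ}

theorem Reachable.exists_populated_src {ℓ : L} (h : Reachable src dst y κ ℓ) {r : R}
    (hr : src r = ℓ) (hy : 0 < y r) : ∃ e, 0 < y e ∧ 0 < κ (src e) := by
  induction h generalizing r with
  | base hκ => exact ⟨r, hy, hr ▸ hκ⟩
  | step _ hy' ih => exact ih rfl hy'

theorem sub_single_add_single [DecidableEq R] {e : R} (h : 0 < y e) :
    y - Pi.single e 1 + Pi.single e 1 = y :=
  tsub_add_cancel_of_le fun r => by rcases eq_or_ne r e with rfl | hr <;> simp [Nat.one_le_of_lt h, *]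

theorem sum_add_single_mul [Fintype R] [DecidableEq R] (y : R → ℕ) (e : R) (u : R → ℤ) :
    ∑ r, ((y + Pi.single e 1 : R → ℕ) r : ℤ) * u r = ∑ r, (y r : ℤ) * u r + u e := by
  simp only [Pi.add_apply, Nat.cast_add, add_mul, Finset.sum_add_distrib]
  congr 1
  rw [Finset.sum_eq_single e] <;> intros <;> simp_all

section

variable [DecidableEq L]

theorem le_move_of_ne {a ℓ : L} (b : L) (κ : L → ℕ) (h : ℓ ≠ a) : κ ℓ ≤ move a b κ ℓ := by
  simp [move, h]

theorem move_le_of_ne {b ℓ : L} (a : L) (κ : L → ℕ) (h : ℓ ≠ b) : move a b κ ℓ ≤ κ ℓ := by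
  simp [move, h]

theorem move_pos_of_ne {a b : L} (κ : L → ℕ) (h : b ≠ a) : 0 < move a b κ b := by
  simp [move, h]

theorem move_self (a : L) (κ : L → ℕ) : move a a κ = κ := by
  funext ℓ
  by_cases h : ℓ = a <;> simp [move, h]

theorem natCast_move {a b : L} {κ : L → ℕ} (h : 0 < κ a) (ℓ : L) :
    (move a b κ ℓ : ℤ) = κ ℓ + ((if b = ℓ then 1 else 0) - (if a = ℓ then 1 else 0)) := by
  unfold move
  split_ifs <;> subst_vars <;> simp_all
  omega

section

variable [DecidableEq R]

theorem Reachable.fire_or_eq {e : R} {ℓ : L}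
    (hsrc : Reachable src dst (y - Pi.single e 1) (move (src e) (dst e) κ) (src e) ∨
      ∀ r, src r = src e → (y - Pi.single e 1 : R → ℕ) r = 0)
    (h : Reachable src dst y κ ℓ) :
    Reachable src dst (y - Pi.single e 1) (move (src e) (dst e) κ) ℓ ∨ ℓ = src e := by
  induction h with
  | @base m hm =>
    by_cases hme : m = src e
    · exact .inr hme
    · exact .inl (.base (lt_of_lt_of_le hm (le_move_of_ne _ _ hme)))
  | @step r _ hr ih =>
    by_cases hre : r = e
    · subst hre
      by_cases hds : dst r = src r
      · exact .inr hds
      · exact .inl (.base (move_pos_of_ne _ hds))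
    have hr' : 0 < (y - Pi.single e 1 : R → ℕ) r := by simpa [hre] using hr
    refine .inl (.step ?_ hr')
    rcases ih with ih | ih
    · exact ih
    rcases hsrc with hsrc | hsrc
    · exact ih ▸ hsrc
    · exact absurd (hsrc r ih) hr'.ne'

theorem Rooted.fire {e : R} (hroot : Rooted src dst y κ)
    (hsrc : Reachable src dst (y - Pi.single e 1) (move (src e) (dst e) κ) (src e) ∨
      ∀ r, src r = src e → (y - Pi.single e 1 : R → ℕ) r = 0) :
    Rooted src dst (y - Pi.single e 1) (move (src e) (dst e) κ) := by
  intro r hr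
  rcases (hroot r (lt_of_lt_of_le hr tsub_le_self)).fire_or_eq hsrc with h | h
  · exact h
  rcases hsrc with hsrc | hsrc
  · exact h ▸ hsrc
  · exact absurd (hsrc r h) hr.ne'

theorem Reachable.of_fire {e : R} (hκ : 0 < κ (src e)) {ℓ : L}
    (h : Reachable src dst y (move (src e) (dst e) κ) ℓ) :
    Reachable src dst (y + Pi.single e 1) κ ℓ := by
  induction h with
  | @base m hm =>
    by_cases hmd : m = dst e
    · exact hmd ▸ .step (.base hκ) (by simp)
    · exact .base (lt_of_lt_of_le hm (move_le_of_ne _ _ hmd))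
  | step _ hr ih => exact .step ih (by simp [hr])

theorem Rooted.of_fire {e : R} (hκ : 0 < κ (src e))
    (hroot : Rooted src dst y (move (src e) (dst e) κ)) :
    Rooted src dst (y + Pi.single e 1) κ := by
  intro r hr
  by_cases hre : r = e
  · exact .base (hre ▸ hκ)
  · exact (hroot r (by simpa [hre] using hr)).of_fire hκ

end

variable [Fintype R]

theorem netFlow_add_single [DecidableEq R] (y : R → ℕ) (e : R) (ℓ : L) :
    netFlow src dst (y + Pi.single e 1) ℓ =
      netFlow src dst y ℓ + ((if dst e = ℓ then 1 else 0) - (if src e = ℓ then 1 else 0)) := by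
  have key : ∀ f : R → L, (∑ r, if f r = ℓ then ((y + Pi.single e 1 : R → ℕ) r : ℤ) else 0) =
      (∑ r, if f r = ℓ then (y r : ℤ) else 0) + if f e = ℓ then 1 else 0 := by
    intro f
    simp only [Pi.add_apply, Nat.cast_add, ite_add_zero, Finset.sum_add_distrib]
    congr 1
    rw [Finset.sum_eq_single e] <;> intros <;> simp_all
  simp only [netFlow, key]
  ring

theorem flow_move_iff [DecidableEq R] {e : R} (hκ : 0 < κ (src e)) :
    (∀ ℓ, (κ' ℓ : ℤ) - move (src e) (dst e) κ ℓ = netFlow src dst y ℓ) ↔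
      ∀ ℓ, (κ' ℓ : ℤ) - κ ℓ = netFlow src dst (y + Pi.single e 1) ℓ := by
  refine forall_congr' fun ℓ => ?_
  rw [natCast_move hκ, netFlow_add_single]
  constructor <;> intro h <;> linarith

theorem sum_netFlow (y : R → ℕ) (S : Finset L) :
    ∑ ℓ ∈ S, netFlow src dst y ℓ = (inflow src dst y S : ℤ) - outflow src dst y S := by
  simp only [netFlow, inflow, outflow, Finset.sum_sub_distrib]
  rw [Finset.sum_comm, Finset.sum_comm (s := S)]
  simp only [Finset.sum_ite_eq]
  push_cast
  rw [← Finset.sum_sub_distrib, ← Finset.sum_sub_distrib]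
  refine Finset.sum_congr rfl fun r _ => ?_
  split_ifs <;> simp_all

theorem inflow_eq_zero_iff {S : Finset L} :
    inflow src dst y S = 0 ↔ ∀ r, 0 < y r → dst r ∈ S → src r ∈ S := by
  simp only [inflow, Finset.sum_eq_zero_iff, Finset.mem_univ, true_implies, ite_eq_right_iff]
  exact forall_congr' fun r => by grind

theorem outflow_eq_zero_iff {S : Finset L} :
    outflow src dst y S = 0 ↔ ∀ r, 0 < y r → src r ∈ S → dst r ∈ S := by
  simp only [outflow, Finset.sum_eq_zero_iff, Finset.mem_univ, true_implies, ite_eq_right_iff]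
  exact forall_congr' fun r => by grind

theorem sum_add_outflow (hflow : ∀ ℓ, (κ' ℓ : ℤ) - κ ℓ = netFlow src dst y ℓ) (S : Finset L) :
    ∑ ℓ ∈ S, κ' ℓ + outflow src dst y S = ∑ ℓ ∈ S, κ ℓ + inflow src dst y S := by
  have h := sum_netFlow (src := src) (dst := dst) y S
  simp only [← hflow, Finset.sum_sub_distrib] at h
  zify
  linarith

variable [Fintype L]

theorem not_reachable_isolated (hflow : ∀ ℓ, (κ' ℓ : ℤ) - κ ℓ = netFlow src dst y ℓ) :
    (∀ ℓ, ¬Reachable src dst y κ ℓ → κ' ℓ = 0) ∧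
      ∀ r, 0 < y r → ¬Reachable src dst y κ (src r) → ¬Reachable src dst y κ (dst r) := by
  classical
  set Λ := Finset.univ.filter fun ℓ => ¬Reachable src dst y κ ℓ
  have hκ : ∑ ℓ ∈ Λ, κ ℓ = 0 :=
    Finset.sum_eq_zero fun ℓ hℓ => by
      by_contra h
      exact (Finset.mem_filter.1 hℓ).2 (.base (Nat.pos_of_ne_zero h))
  have hin : inflow src dst y Λ = 0 := by
    refine inflow_eq_zero_iff.2 fun r hr hd => ?_
    simp only [Λ, Finset.mem_filter, Finset.mem_univ, true_and] at hd ⊢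
    exact fun hs => hd (.step hs hr)
  have hcut := sum_add_outflow hflow Λ
  rw [hκ, hin] at hcut
  obtain ⟨hκ', hout⟩ := Nat.add_eq_zero_iff.1 hcut
  refine ⟨fun ℓ hℓ => Finset.sum_eq_zero_iff.1 hκ' ℓ (by simpa [Λ] using hℓ), fun r hr hs => ?_⟩
  simpa [Λ] using outflow_eq_zero_iff.1 hout r hr (by simpa [Λ] using hs)

variable [DecidableEq R]

theorem reachable_src_fire_of_not_reachable_src {e g : R}
    (hflow : ∀ ℓ, (κ' ℓ : ℤ) - move (src e) (dst e) κ ℓ = netFlow src dst (y - Pi.single e 1) ℓ)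
    (hκ : 0 < κ (src e))
    (hna : ¬Reachable src dst (y - Pi.single e 1) (move (src e) (dst e) κ) (src e))
    (hg : src g = src e) (hyg : 0 < (y - Pi.single e 1 : R → ℕ) g) :
    Reachable src dst (y - Pi.single g 1) (move (src g) (dst g) κ) (src g) := by
  classical
  set y₁ := y - Pi.single e 1
  set κ₁ := move (src e) (dst e) κ
  set y₂ := y - Pi.single g 1
  set κ₂ := move (src g) (dst g) κ
  by_cases hloop : dst g = src g
  · exact .base (by simpa [κ₂, hloop, move_self] using hg ▸ hκ)
  by_contra hna₂
  obtain ⟨hκ'₁, hclosed⟩ := not_reachable_isolated hflow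
  -- `S` is empty before and after, and nothing leaves it along `y₁`, so nothing enters it either;
  -- but `g` does.
  set S := Finset.univ.filter fun ℓ => ¬Reachable src dst y₁ κ₁ ℓ ∧ Reachable src dst y₂ κ₂ ℓ
  have hmem : ∀ ℓ, ℓ ∈ S ↔ ¬Reachable src dst y₁ κ₁ ℓ ∧ Reachable src dst y₂ κ₂ ℓ := by
    simp [S]
  have hdg : dst g ∈ S := (hmem _).2 ⟨hclosed g hyg (hg ▸ hna), .base (move_pos_of_ne _ hloop)⟩
  have hκ₁ : ∑ ℓ ∈ S, κ₁ ℓ = 0 :=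
    Finset.sum_eq_zero fun ℓ hℓ => by
      by_contra h
      exact ((hmem ℓ).1 hℓ).1 (.base (Nat.pos_of_ne_zero h))
  have hκ' : ∑ ℓ ∈ S, κ' ℓ = 0 := Finset.sum_eq_zero fun ℓ hℓ => hκ'₁ ℓ ((hmem ℓ).1 hℓ).1
  have hout : outflow src dst y₁ S = 0 := by
    refine outflow_eq_zero_iff.2 fun r hr hs => ?_
    obtain ⟨hs₁, hs₂⟩ := (hmem _).1 hs
    have hrg : r ≠ g := by rintro rfl; exact hna₂ hs₂
    have hr₂ : 0 < y₂ r := by simpa [y₂, hrg] using lt_of_lt_of_le hr tsub_le_self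
    exact (hmem _).2 ⟨hclosed r hr hs₁, .step hs₂ hr₂⟩
  have hin : inflow src dst y₁ S = 0 := by
    have := sum_add_outflow hflow S
    omega
  exact hna₂ ((hmem _).1 (inflow_eq_zero_iff.1 hin g hyg hdg)).2

theorem Rooted.exists_fire (hflow : ∀ ℓ, (κ' ℓ : ℤ) - κ ℓ = netFlow src dst y ℓ)
    (hroot : Rooted src dst y κ) {r₀ : R} (hr₀ : 0 < y r₀) :
    ∃ e, 0 < y e ∧ 0 < κ (src e) ∧
      Rooted src dst (y - Pi.single e 1) (move (src e) (dst e) κ) := by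
  obtain ⟨e, he, hκ⟩ := (hroot r₀ hr₀).exists_populated_src rfl hr₀
  by_cases hsrc : Reachable src dst (y - Pi.single e 1) (move (src e) (dst e) κ) (src e) ∨
      ∀ r, src r = src e → (y - Pi.single e 1 : R → ℕ) r = 0
  · exact ⟨e, he, hκ, hroot.fire hsrc⟩
  push Not at hsrc
  obtain ⟨hna, g, hg, hyg⟩ := hsrc
  have hflow₁ := (flow_move_iff (y := y - Pi.single e 1) hκ).2 (by rwa [sub_single_add_single he])
  have hyg' := Nat.pos_of_ne_zero hyg
  exact ⟨g, lt_of_lt_of_le hyg' tsub_le_self, hg ▸ hκ,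
    hroot.fire (.inl (reachable_src_fire_of_not_reachable_src hflow₁ hκ hna hg hyg'))⟩

end

end TokenGraph

open TokenGraph

theorem TGuard.holds_iff_of_le [Fintype P] {φ : TGuard V P} {g₁ g g₂ : V → ℕ} {p : P → ℕ}
    (h₁ : g₁ ≤ g) (h₂ : g ≤ g₂) (h : φ.holds g₁ p ↔ φ.holds g₂ p) :
    φ.holds g p ↔ φ.holds g₁ p := by
  have l₁ : (g₁ φ.var : ℚ) ≤ g φ.var := by exact_mod_cast h₁ φ.var
  have l₂ : (g φ.var : ℚ) ≤ g₂ φ.var := by exact_mod_cast h₂ φ.var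
  unfold TGuard.holds at h ⊢
  split_ifs at h ⊢
  · exact ⟨fun hg => h.2 (hg.trans l₂), fun hg => hg.trans l₁⟩
  · exact ⟨fun hg => l₁.trans_lt hg, fun hg => l₂.trans_lt (h.1 hg)⟩

namespace TA

variable (ta : TA L V P R)

abbrev src (r : R) : L := (ta.rule r).src

abbrev dst (r : R) : L := (ta.rule r).dst

section

variable [Fintype P]

theorem context_eq_iff {σ₁ σ₂ : Config L V P} :
    ta.context σ₁ = ta.context σ₂ ↔
      ∀ φ ∈ ta.guards, (φ.holds σ₁.g σ₁.p ↔ φ.holds σ₂.g σ₂.p) := by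
  simp only [context, Set.ext_iff, Set.mem_ofPred_eq]
  refine ⟨fun h φ hφ => ?_, fun h φ => and_congr_right fun hφ => ?_⟩
  · have := h φ
    simp only [hφ, true_and] at this
    split_ifs at this
    · exact this
    · exact not_iff_not.1 this
  · rw [h φ hφ]

theorem context_eq_of_le {σ σ₁ σ' : Config L V P} (hctx : ta.context σ = ta.context σ')
    (h₁ : σ.g ≤ σ₁.g) (h₂ : σ₁.g ≤ σ'.g) (hp₁ : σ₁.p = σ.p) (hp' : σ'.p = σ.p) :
    ta.context σ₁ = ta.context σ := by
  rw [context_eq_iff] at hctx ⊢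
  intro φ hφ
  rw [hp₁]
  exact TGuard.holds_iff_of_le h₁ h₂ (hp' ▸ hctx φ hφ)

theorem chainTo_iff {y : R → ℕ} {σ : Config L V P} {r : R} :
    ta.chainTo y σ r ↔ 0 < y r ∧ Reachable ta.src ta.dst y σ.κ (ta.src r) := by
  constructor
  · rintro ⟨c, hne, hpos, hhead, hchain, rfl⟩
    refine ⟨hpos _ (List.getLast_mem hne), ?_⟩
    refine (List.IsChain.iff_mem.1 hchain).induction
      (fun r => Reachable ta.src ta.dst y σ.κ (ta.src r)) c ?_ (fun _ => .base hhead) _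
      (List.getLast_mem hne)
    rintro x z ⟨hx, -, hxz⟩ h
    exact (show ta.dst x = ta.src z from hxz) ▸ .step h (hpos x hx)
  · rintro ⟨hr, h⟩
    suffices ∀ ℓ, Reachable ta.src ta.dst y σ.κ ℓ → ∀ r, ta.src r = ℓ → 0 < y r →
        ta.chainTo y σ r from this _ h r rfl hr
    intro ℓ h
    induction h with
    | base hκ =>
      rintro r rfl hr
      exact ⟨[r], by simp, by simpa using hr, hκ, List.isChain_singleton r, rfl⟩
    | @step r' _ hr' ih =>
      rintro r hrr' hr
      obtain ⟨c, hne, hpos, hhead, hchain, rfl⟩ := ih r' rfl hr'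
      refine ⟨c ++ [r], by simp, by simpa [or_imp, forall_and] using ⟨hpos, hr⟩, ?_, ?_, by simp⟩
      · rwa [List.head_append_of_ne_nil hne]
      · exact hchain.append (List.isChain_singleton r)
          (by simp [List.getLast?_eq_some_getLast hne, hrr'])

theorem forall_chainTo_iff_rooted {y : R → ℕ} {σ : Config L V P} :
    (∀ r, 0 < y r → ta.chainTo y σ r) ↔ Rooted ta.src ta.dst y σ.κ :=
  forall₂_congr fun _ hr => by rw [chainTo_iff]; exact and_iff_right hr

end

theorem self_mem_visited [DecidableEq L] (σ : Config L V P) (τ : List R) :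
    σ ∈ ta.visited σ τ := by
  cases τ <;> simp [visited]

variable [Fintype P] [DecidableEq L]

theorem steady_cons {σ : Config L V P} {e : R} {τ : List R} :
    ta.steady σ (e :: τ) ↔
      ta.context ((ta.rule e).fire σ) = ta.context σ ∧ ta.steady ((ta.rule e).fire σ) τ := by
  simp only [steady, visited, List.forall_mem_cons, true_and]
  refine ⟨fun h => ⟨h _ (ta.self_mem_visited _ _), fun σ' hσ' => ?_⟩,
    fun ⟨h₁, h₂⟩ σ' hσ' => (h₂ σ' hσ').trans h₁⟩
  exact (h σ' hσ').trans (h _ (ta.self_mem_visited _ _)).symm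

variable [Fintype R]

theorem witnessesSteady_self (σ : Config L V P) : ta.witnessesSteady σ σ 0 :=
  ⟨rfl, rfl, by simp, by simp, by simp, by simp⟩

theorem eq_of_witnessesSteady_zero {σ σ' : Config L V P} (h : ta.witnessesSteady σ σ' 0) :
    σ = σ' := by
  obtain ⟨hp, -, hκ, hg, -⟩ := h
  have hκ' : σ.κ = σ'.κ := funext fun ℓ => by
    have := hκ ℓ
    simp only [Pi.zero_apply, Nat.cast_zero, ite_self, Finset.sum_const_zero, sub_self] at this
    omega
  have hg' : σ.g = σ'.g := funext fun z => by
    have := hg z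
    simp only [Pi.zero_apply, Nat.cast_zero, zero_mul, Finset.sum_const_zero] at this
    omega
  cases σ
  cases σ'
  simp_all

variable [DecidableEq R]

theorem witnessesSteady_of_fire {σ σ' : Config L V P} {y : R → ℕ} {e : R}
    (hen : (ta.rule e).enabledAt σ) (hctx : ta.context ((ta.rule e).fire σ) = ta.context σ)
    (hw : ta.witnessesSteady ((ta.rule e).fire σ) σ' y) :
    ta.witnessesSteady σ σ' (y + Pi.single e 1) := by
  obtain ⟨hp, hctx', hκ, hg, hguard, hchain⟩ := hw
  refine ⟨hp, hctx.symm.trans hctx', (flow_move_iff (src := ta.src) (dst := ta.dst) hen.1).1 hκ,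
    fun z => ?_, fun r hr φ hφ => ?_, ?_⟩
  · have := hg z
    rw [sum_add_single_mul]
    simp only [TRule.fire, Nat.cast_add] at this
    linarith
  · obtain rfl | hre := eq_or_ne r e
    · exact hen.2 φ hφ
    · exact ((ta.context_eq_iff.1 hctx) φ ⟨r, hφ⟩).1 (hguard r (by simpa [hre] using hr) φ hφ)
  · exact ta.forall_chainTo_iff_rooted.2 ((ta.forall_chainTo_iff_rooted.1 hchain).of_fire hen.1)

theorem witnessesSteady_count {σ : Config L V P} {τ : List R} (happ : ta.applicable σ τ)
    (hst : ta.steady σ τ) : ta.witnessesSteady σ (ta.apply σ τ) fun r => τ.count r := by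
  induction τ generalizing σ with
  | nil => exact ta.witnessesSteady_self σ
  | cons e τ ih =>
    obtain ⟨hctx, hst'⟩ := ta.steady_cons.1 hst
    have hcount : (fun r => (e :: τ).count r) = (fun r => τ.count r) + Pi.single e 1 := by
      funext r
      obtain rfl | h := eq_or_ne r e
      · simp
      · simp [h, h.symm]
    rw [hcount]
    exact ta.witnessesSteady_of_fire happ.1 hctx (ih happ.2 hst')

theorem witnessesSteady_fire {σ σ' : Config L V P} {y : R → ℕ} {e : R}
    (hw : ta.witnessesSteady σ σ' y) (he : 0 < y e) (hκ : 0 < σ.κ (ta.src e))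
    (hroot : Rooted ta.src ta.dst (y - Pi.single e 1) (move (ta.src e) (ta.dst e) σ.κ)) :
    (ta.rule e).enabledAt σ ∧ ta.context ((ta.rule e).fire σ) = ta.context σ ∧
      ta.witnessesSteady ((ta.rule e).fire σ) σ' (y - Pi.single e 1) := by
  obtain ⟨hp, hctx, hκ', hg, hguard, -⟩ := hw
  rw [← sub_single_add_single he] at hκ' hg
  have hg₁ : ∀ z, (σ'.g z : ℤ) - ((ta.rule e).fire σ).g z =
      ∑ r, ((y - Pi.single e 1 : R → ℕ) r : ℤ) * ((ta.rule r).upd z : ℤ) := fun z => by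
    have := hg z
    rw [sum_add_single_mul] at this
    simp only [TRule.fire, Nat.cast_add]
    linarith
  have hle : ((ta.rule e).fire σ).g ≤ σ'.g := fun z => by
    have h₁ := hg₁ z
    have h₂ : (0 : ℤ) ≤ ∑ r, ((y - Pi.single e 1 : R → ℕ) r : ℤ) * ((ta.rule r).upd z : ℤ) :=
      Finset.sum_nonneg fun r _ => by positivity
    exact_mod_cast (by linarith : (((ta.rule e).fire σ).g z : ℤ) ≤ σ'.g z)
  have hctx₁ : ta.context ((ta.rule e).fire σ) = ta.context σ :=
    ta.context_eq_of_le hctx (fun _ => Nat.le_add_right _ _) hle rfl hp.symm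
  refine ⟨⟨hκ, hguard e he⟩, hctx₁, hp, hctx₁.trans hctx,
    (flow_move_iff (src := ta.src) (dst := ta.dst) hκ).2 hκ', hg₁, fun r hr φ hφ => ?_,
    ta.forall_chainTo_iff_rooted.2 hroot⟩
  exact (ta.context_eq_iff.1 hctx₁ φ ⟨r, hφ⟩).2 (hguard r (lt_of_lt_of_le hr tsub_le_self) φ hφ)

theorem exists_steady_of_witnessesSteady [Fintype L] {σ σ' : Config L V P} {y : R → ℕ}
    (hw : ta.witnessesSteady σ σ' y) :
    ∃ τ, ta.applicable σ τ ∧ ta.steady σ τ ∧ ta.apply σ τ = σ' := by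
  by_cases hy : ∃ r, 0 < y r
  · obtain ⟨r₀, hr₀⟩ := hy
    obtain ⟨-, -, hflow, -, -, hchain⟩ := id hw
    obtain ⟨e, he, hκ, hroot⟩ := (ta.forall_chainTo_iff_rooted.1 hchain).exists_fire hflow hr₀
    obtain ⟨hen, hctx, hw₁⟩ := ta.witnessesSteady_fire hw he hκ hroot
    have : ∑ r, (y - Pi.single e 1 : R → ℕ) r < ∑ r, y r :=
      Finset.sum_lt_sum (fun r _ => tsub_le_self) ⟨e, Finset.mem_univ e, by simpa using he⟩
    obtain ⟨τ, happ, hst, rfl⟩ := exists_steady_of_witnessesSteady hw₁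
    exact ⟨e :: τ, ⟨hen, happ⟩, ta.steady_cons.2 ⟨hctx, hst⟩, rfl⟩
  · push Not at hy
    obtain rfl : y = 0 := funext fun r => Nat.eq_zero_of_le_zero (hy r)
    exact ⟨[], trivial, fun _ h => by simp_all [visited], ta.eq_of_witnessesSteady_zero hw⟩
termination_by ∑ r, y r

end TA

theorem steady_schedule_iff_witness_general [Fintype P] [DecidableEq L] [Fintype L] [Fintype R]
    (ta : TA L V P R) (σ σ' : Config L V P) :
    (∃ τ : List R, ta.applicable σ τ ∧ ta.steady σ τ ∧ ta.apply σ τ = σ') ↔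
    (∃ y : R → ℕ, ta.witnessesSteady σ σ' y) := by
  classical
  constructor
  · rintro ⟨τ, happ, hst, rfl⟩
    exact ⟨_, ta.witnessesSteady_count happ hst⟩
  · rintro ⟨y, hw⟩
    exact ta.exists_steady_of_witnessesSteady hw

/-- There exists a steady schedule `τ` applicable to `σ` with `τ(σ) = σ'` if and only if
some assignment `y : R → ℕ` witnesses steady reachability from `σ` to `σ'`. -/
theorem steady_schedule_iff_witness [Fintype P] [DecidableEq L] [Fintype L] [Fintype R]
    (ta : TA L V P R) (σ σ' : Config L V P)
    (hσ : ta.validConfig σ) (hσ' : ta.validConfig σ') :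
    (∃ τ : List R, ta.applicable σ τ ∧ ta.steady σ τ ∧ ta.apply σ τ = σ') ↔
    (∃ y : R → ℕ, ta.witnessesSteady σ σ' y) :=
  steady_schedule_iff_witness_general ta σ σ'
end

section
/- Let σ, σ' be configurations of a threshold automaton such that steady reachability from σ to σ' is witnessed by the assignment Y = {y_r}_{r∈R}. Suppose t is a rule with y_t > 0 and σ.κ(t.from) > 0, and suppose there is no fireable cycle at t.from with respect to Y. Then t is enabled at σ, and steady reachability from t(σ) to σ' is witnessed by an assignment Z = {z_r}_{r∈R} with Σ_{r∈R} z_r < Σ_{r∈R} y_r. -/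
variable {L V P R : Type}

/-- A fireable cycle at location `ℓ` with respect to an assignment `y`: a sequence of rules,
all fired at least once according to `y`, consecutively linked, starting and ending at `ℓ`. -/
def TA.fireableCycleAt (ta : TA L V P R) (y : R → ℕ) (ℓ : L) : Prop :=
  ∃ (c : List R) (hne : c ≠ []),
    (∀ r ∈ c, 0 < y r) ∧
    List.Chain' (fun a b => (ta.rule a).dst = (ta.rule b).src) c ∧
    (ta.rule (c.head hne)).src = ℓ ∧ (ta.rule (c.getLast hne)).dst = ℓ

/-- Every member of a list can be split off at its *last* occurrence. -/
private lemma exists_split_last_occ {α : Type*} [DecidableEq α] {t : α} :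
    ∀ {c : List α}, t ∈ c → ∃ c₁ c₂, c = c₁ ++ t :: c₂ ∧ t ∉ c₂ := by
  intro c h
  induction c with
  | nil => cases h
  | cons a rest ih =>
    by_cases hr : t ∈ rest
    · obtain ⟨c₁, c₂, he, hn⟩ := ih hr
      exact ⟨a :: c₁, c₂, by simp [he], hn⟩
    · have ha : a = t := by
        rcases List.mem_cons.1 h with h' | h'
        · exact h'.symm
        · exact absurd h' hr
      exact ⟨[], rest, by simp [ha], hr⟩

/-- If `Y` witnesses steady reachability from `σ` to `σ'`, `t` is a rule with `y t > 0` and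
`σ.κ(t.from) > 0`, and there is no fireable cycle at `t.from` with respect to `Y`, then `t`
is enabled at `σ` and steady reachability from `t(σ)` to `σ'` is witnessed by an assignment
`Z` with `Σ_r z_r < Σ_r y_r`. -/
theorem witness_decreases_no_cycle [Fintype P] [DecidableEq L] [Fintype L] [Fintype R]
    (ta : TA L V P R) (σ σ' : Config L V P)
    (hσ : ta.validConfig σ) (hσ' : ta.validConfig σ')
    (y : R → ℕ) (hw : ta.witnessesSteady σ σ' y)
    (t : R) (hyt : 0 < y t) (hκ : 0 < σ.κ (ta.rule t).src)
    (hnc : ¬ ta.fireableCycleAt y (ta.rule t).src) :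
    (ta.rule t).enabledAt σ ∧
    ∃ z : R → ℕ, ta.witnessesSteady ((ta.rule t).fire σ) σ' z ∧
      ∑ r : R, z r < ∑ r : R, y r := by
  classical
  obtain ⟨hp, hctx, hκflow, hgflow, hguards, hchain⟩ := hw
  refine ⟨⟨hκ, hguards t hyt⟩, ?_⟩
  set σ₁ : Config L V P := (ta.rule t).fire σ with hσ₁def
  have hσ₁p : σ₁.p = σ.p := rfl
  have hσ₁g : ∀ v, σ₁.g v = σ.g v + (ta.rule t).upd v := fun _ => rfl
  have hswap : ∀ a b : L, (if a = b then (1 : ℤ) else 0) = (if b = a then 1 else 0) := by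
    intro a b
    by_cases h : a = b
    · rw [if_pos h, if_pos h.symm]
    · rw [if_neg h, if_neg (fun hh => h hh.symm)]
  have hσ₁κ : ∀ ℓ, (σ₁.κ ℓ : ℤ)
      = (σ.κ ℓ : ℤ) + (if (ta.rule t).dst = ℓ then 1 else 0)
        - (if (ta.rule t).src = ℓ then 1 else 0) := by
    intro ℓ
    have e : σ₁.κ ℓ = σ.κ ℓ + (if ℓ = (ta.rule t).dst then 1 else 0)
        - (if ℓ = (ta.rule t).src then 1 else 0) := rfl
    rw [e, hswap ((ta.rule t).dst) ℓ, hswap ((ta.rule t).src) ℓ]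
    by_cases hs : ℓ = (ta.rule t).src
    · subst hs
      split_ifs <;> omega
    · simp only [if_neg hs]
      split_ifs <;> omega
  -- monotonicity of shared variables
  have hg2 : ∀ v, (σ₁.g v : ℤ) ≤ (σ'.g v : ℤ) := by
    intro v
    have h1 : ((y t : ℤ) * ((ta.rule t).upd v : ℤ))
        ≤ ∑ r : R, (y r : ℤ) * ((ta.rule r).upd v : ℤ) :=
      Finset.single_le_sum (f := fun r => (y r : ℤ) * ((ta.rule r).upd v : ℤ))
        (fun r _ => by positivity) (Finset.mem_univ t)
    have h2 : (((ta.rule t).upd v : ℤ)) ≤ (y t : ℤ) * ((ta.rule t).upd v : ℤ) :=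
      le_mul_of_one_le_left (by positivity) (by exact_mod_cast hyt)
    have h3 := hgflow v
    have h4 : (σ₁.g v : ℤ) = (σ.g v : ℤ) + ((ta.rule t).upd v : ℤ) := by
      rw [hσ₁g v]; push_cast; ring
    linarith
  -- the key guard-transfer fact
  have hkey : ∀ φ, φ ∈ ta.guards → (φ.holds σ₁.g σ.p ↔ φ.holds σ.g σ.p) := by
    intro φ hφ
    have hn1 : σ.g φ.var ≤ σ₁.g φ.var := by rw [hσ₁g]; exact Nat.le_add_right _ _
    have hq1 : (σ.g φ.var : ℚ) ≤ (σ₁.g φ.var : ℚ) := by exact_mod_cast hn1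
    have hq2 : (σ₁.g φ.var : ℚ) ≤ (σ'.g φ.var : ℚ) := by exact_mod_cast hg2 φ.var
    have hmem : ∀ σ₀ : Config L V P, φ ∈ ta.context σ₀ ↔
        (φ ∈ ta.guards ∧ if φ.isRise then φ.holds σ₀.g σ₀.p else ¬ φ.holds σ₀.g σ₀.p) :=
      fun _ => Iff.rfl
    have hctx' := Set.ext_iff.1 hctx φ
    rw [hmem, hmem] at hctx'
    by_cases hr : φ.isRise = true
    · simp only [TGuard.holds, if_pos hr] at hctx' ⊢
      constructor
      · intro h1
        have h2 : φ.a0 + ∑ i : P, φ.coef i * (σ'.p i : ℚ) ≤ (σ'.g φ.var : ℚ) := by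
          rw [← hp]; exact le_trans h1 hq2
        exact (hctx'.2 ⟨hφ, h2⟩).2
      · intro h1; exact le_trans h1 hq1
    · simp only [TGuard.holds, if_neg hr] at hctx' ⊢
      constructor
      · intro h1; exact lt_of_le_of_lt hq1 h1
      · intro h1
        by_contra h2
        push_neg at h2
        have h3 : ¬ ((σ'.g φ.var : ℚ) < φ.a0 + ∑ i : P, φ.coef i * (σ'.p i : ℚ)) := by
          rw [← hp]; push_neg; exact le_trans h2 hq2
        have := (hctx'.2 ⟨hφ, h3⟩).2
        exact this h1
  have hctx1 : ta.context σ₁ = ta.context σ := by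
    ext φ
    show (φ ∈ ta.guards ∧ _) ↔ (φ ∈ ta.guards ∧ _)
    constructor <;> rintro ⟨hg, h⟩ <;> refine ⟨hg, ?_⟩
    · by_cases hr : φ.isRise = true
      · rw [if_pos hr] at h ⊢; exact (hkey φ hg).1 h
      · rw [if_neg hr] at h ⊢; exact fun h' => h ((hkey φ hg).2 h')
    · by_cases hr : φ.isRise = true
      · rw [if_pos hr] at h ⊢; exact (hkey φ hg).2 h
      · rw [if_neg hr] at h ⊢; exact fun h' => h ((hkey φ hg).1 h')
  -- the new assignment
  set z : R → ℕ := fun r => if r = t then y t - 1 else y r with hzdef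
  have hzt : z t = y t - 1 := if_pos rfl
  have hzne : ∀ r, r ≠ t → z r = y r := fun r h => if_neg h
  have hzy : ∀ r, 0 < z r → 0 < y r := by
    intro r h
    by_cases hrt : r = t
    · subst hrt; omega
    · rwa [hzne r hrt] at h
  have hzcast : ∀ r, (z r : ℤ) = (y r : ℤ) - (if r = t then 1 else 0) := by
    intro r
    by_cases hrt : r = t
    · subst hrt; rw [hzt, if_pos rfl]; omega
    · rw [hzne r hrt, if_neg hrt]; omega
  -- positivity of κ after the firing
  have hd : 0 < σ₁.κ ((ta.rule t).dst) := by
    have h := hσ₁κ ((ta.rule t).dst)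
    rw [if_pos rfl] at h
    by_cases hsd : (ta.rule t).src = (ta.rule t).dst
    · rw [if_pos hsd] at h
      have hκ' : 0 < σ.κ ((ta.rule t).dst) := hsd ▸ hκ
      omega
    · rw [if_neg hsd] at h; omega
  have hpres : ∀ ℓ, ℓ ≠ (ta.rule t).src → 0 < σ.κ ℓ → 0 < σ₁.κ ℓ := by
    intro ℓ h1 h2
    have h := hσ₁κ ℓ
    rw [if_neg (show ¬ (ta.rule t).src = ℓ from fun h' => h1 h'.symm)] at h
    by_cases hdℓ : (ta.rule t).dst = ℓ
    · rw [if_pos hdℓ] at h; omega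
    · rw [if_neg hdℓ] at h; omega
  have hdep : σ₁.κ ((ta.rule t).src) = 0 →
      σ.κ ((ta.rule t).src) = 1 ∧ (ta.rule t).dst ≠ (ta.rule t).src := by
    intro h0
    have h := hσ₁κ ((ta.rule t).src)
    rw [if_pos rfl] at h
    by_cases hds : (ta.rule t).dst = (ta.rule t).src
    · rw [if_pos hds] at h; exact absurd rfl (by omega : ¬ (0:ℤ) = 0)
    · rw [if_neg hds] at h; exact ⟨by omega, hds⟩
  refine ⟨z, ⟨hp, hctx1.trans hctx, ?_, ?_, ?_, ?_⟩, ?_⟩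
  · -- κ flow
    intro ℓ
    have hsum : ∀ f : R → L, (∑ r : R, if f r = ℓ then (z r : ℤ) else 0)
        = (∑ r : R, if f r = ℓ then (y r : ℤ) else 0) - (if f t = ℓ then 1 else 0) := by
      intro f
      have he : ∀ r : R, (if f r = ℓ then (z r : ℤ) else 0)
          = (if f r = ℓ then (y r : ℤ) else 0)
            - (if r = t then (if f t = ℓ then 1 else 0) else 0) := by
        intro r
        by_cases hrt : r = t
        · subst hrt
          by_cases hf : f r = ℓ
          · rw [if_pos hf, if_pos hf, if_pos rfl, if_pos hf, hzcast, if_pos rfl]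
          · rw [if_neg hf, if_neg hf, if_pos rfl, if_neg hf]; ring
        · rw [if_neg hrt, hzne r hrt, sub_zero]
      rw [Finset.sum_congr rfl fun r _ => he r, Finset.sum_sub_distrib]
      congr 1
      simp
    have h1 := hκflow ℓ
    have h2 := hσ₁κ ℓ
    rw [hsum, hsum]
    linarith
  · -- g flow
    intro v
    have hsum : (∑ r : R, (z r : ℤ) * ((ta.rule r).upd v : ℤ))
        = (∑ r : R, (y r : ℤ) * ((ta.rule r).upd v : ℤ)) - ((ta.rule t).upd v : ℤ) := by
      have he : ∀ r : R, (z r : ℤ) * ((ta.rule r).upd v : ℤ)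
          = (y r : ℤ) * ((ta.rule r).upd v : ℤ)
            - (if r = t then ((ta.rule t).upd v : ℤ) else 0) := by
        intro r
        by_cases hrt : r = t
        · subst hrt; rw [hzcast, if_pos rfl, if_pos rfl]; ring
        · rw [hzne r hrt, if_neg hrt, sub_zero]
      rw [Finset.sum_congr rfl fun r _ => he r, Finset.sum_sub_distrib]
      congr 1
      simp
    have h1 := hgflow v
    have h2 : (σ₁.g v : ℤ) = (σ.g v : ℤ) + ((ta.rule t).upd v : ℤ) := by
      rw [hσ₁g v]; push_cast; ring
    rw [hsum]
    linarith
  · -- guards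
    intro r hzr φ hφ
    have h := hguards r (hzy r hzr) φ hφ
    show φ.holds σ₁.g σ.p
    exact (hkey φ ⟨r, hφ⟩).2 h
  · -- chains
    intro r hzr
    -- packaging a z-positive chain
    have C1 : ∀ (d : List R) (hdne : d ≠ []), (∀ r' ∈ d, 0 < z r') →
        List.Chain' (fun a b => (ta.rule a).dst = (ta.rule b).src) d →
        0 < σ₁.κ ((ta.rule (d.head hdne)).src) → d.getLast hdne = r →
        ta.chainTo z σ₁ r :=
      fun d hdne h1 h2 h3 h4 => ⟨d, hdne, h1, h3, h2, h4⟩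
    -- construction from a y-positive chain containing t, when z t = 0
    have C2 : ∀ (d : List R) (hdne : d ≠ []), (∀ r' ∈ d, 0 < y r') →
        List.Chain' (fun a b => (ta.rule a).dst = (ta.rule b).src) d →
        d.getLast hdne = r → t ∈ d → z t = 0 → ta.chainTo z σ₁ r := by
      intro d hdne hdpos hdch hdlast htd hzt0
      obtain ⟨d₁, d₂, hde, htd₂⟩ := exists_split_last_occ htd
      have hd₂ne : d₂ ≠ [] := by
        intro hnil
        have h3 : d.getLast? = some t := by
          rw [hde, hnil]
          rw [List.getLast?_append_of_ne_nil _ (by simp : [t] ≠ ([] : List R))]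
          simp
        rw [List.getLast?_eq_getLast_of_ne_nil hdne, hdlast] at h3
        have hrt : r = t := Option.some_inj.1 h3
        rw [hrt] at hzr
        omega
      have hch2 : List.Chain' (fun a b => (ta.rule a).dst = (ta.rule b).src) (t :: d₂) := by
        rw [hde] at hdch
        exact hdch.right_of_append
      have hrel : (ta.rule t).dst = (ta.rule (d₂.head hd₂ne)).src := by
        have := (List.isChain_cons.1 hch2).1
        exact this _ (List.head?_eq_head hd₂ne)
      refine C1 d₂ hd₂ne ?_ hch2.tail ?_ ?_
      · intro r' hr'
        have hr't : r' ≠ t := fun h => htd₂ (h ▸ hr')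
        rw [hzne r' hr't]
        exact hdpos r' (by rw [hde]; exact List.mem_append_right _ (List.mem_cons_of_mem _ hr'))
      · rw [← hrel]; exact hd
      · have h3 : d.getLast? = d₂.getLast? := by
          rw [hde, show d₁ ++ t :: d₂ = (d₁ ++ [t]) ++ d₂ by simp,
            List.getLast?_append_of_ne_nil _ hd₂ne]
        rw [List.getLast?_eq_getLast_of_ne_nil hdne,
          List.getLast?_eq_getLast_of_ne_nil hd₂ne] at h3
        exact (Option.some_inj.1 h3).symm.trans hdlast
    -- from failure of z-positivity on a y-positive list, extract t with z t = 0
    have Cneg : ∀ d : List R, (∀ r' ∈ d, 0 < y r') → (¬ ∀ r' ∈ d, 0 < z r') →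
        t ∈ d ∧ z t = 0 := by
      intro d hdpos hc
      by_cases hzt0 : z t = 0
      · refine ⟨?_, hzt0⟩
        by_contra htd
        refine hc fun r' hr' => ?_
        have hr't : r' ≠ t := fun h => htd (h ▸ hr')
        rw [hzne r' hr't]
        exact hdpos r' hr'
      · exfalso
        refine hc fun r' hr' => ?_
        by_cases h : r' = t
        · subst h; omega
        · rw [hzne r' h]
          exact hdpos r' hr'
    obtain ⟨c, hne, hpos, hhead, hch, hlast⟩ := hchain r (hzy r hzr)
    by_cases hc : ∀ r' ∈ c, 0 < z r'
    · by_cases hh : 0 < σ₁.κ ((ta.rule (c.head hne)).src)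
      · exact C1 c hne hc hch hh hlast
      · -- the head location got depopulated: it must be the source of t
        have hheq : (ta.rule (c.head hne)).src = (ta.rule t).src := by
          by_contra hne'
          exact hh (hpres _ hne' hhead)
        have h0 : σ₁.κ ((ta.rule t).src) = 0 := by rw [← hheq]; omega
        obtain ⟨hone, hds⟩ := hdep h0
        -- outflow from t.src is at least 2
        have hout2 : (2 : ℤ) ≤ ∑ r' : R,
            (if (ta.rule r').src = (ta.rule t).src then (y r' : ℤ) else 0) := by
          by_cases hht : c.head hne = t
          · have hzt2 : 0 < z t := hht ▸ hc _ (List.head_mem hne)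
            have hyt2 : (2 : ℤ) ≤ (y t : ℤ) := by
              have h2 : 2 ≤ y t := by omega
              exact_mod_cast h2
            have hsing : ∑ r' ∈ ({t} : Finset R),
                (if (ta.rule r').src = (ta.rule t).src then (y r' : ℤ) else 0)
                = (y t : ℤ) := by
              rw [Finset.sum_singleton, if_pos rfl]
            have hle : (∑ r' ∈ ({t} : Finset R),
                  (if (ta.rule r').src = (ta.rule t).src then (y r' : ℤ) else 0))
                ≤ ∑ r' : R, (if (ta.rule r').src = (ta.rule t).src then (y r' : ℤ) else 0) :=
              Finset.sum_le_sum_of_subset_of_nonneg (Finset.subset_univ _)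
                (fun r' _ _ => by positivity)
            rw [hsing] at hle
            linarith
          · have hpair : ∑ r' ∈ ({t, c.head hne} : Finset R),
                (if (ta.rule r').src = (ta.rule t).src then (y r' : ℤ) else 0)
                = (y t : ℤ) + (y (c.head hne) : ℤ) := by
              rw [Finset.sum_pair (fun h => hht h.symm)]
              rw [if_pos rfl, if_pos hheq]
            have hle : (∑ r' ∈ ({t, c.head hne} : Finset R),
                  (if (ta.rule r').src = (ta.rule t).src then (y r' : ℤ) else 0))
                ≤ ∑ r' : R, (if (ta.rule r').src = (ta.rule t).src then (y r' : ℤ) else 0) :=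
              Finset.sum_le_sum_of_subset_of_nonneg (Finset.subset_univ _)
                (fun r' _ _ => by positivity)
            rw [hpair] at hle
            have h1 : (1 : ℤ) ≤ (y t : ℤ) := by exact_mod_cast hyt
            have h2 : (1 : ℤ) ≤ (y (c.head hne) : ℤ) := by
              exact_mod_cast hpos _ (List.head_mem hne)
            linarith
        -- hence there is a rule entering t.src that is fired by y
        have hin : ∃ r₂ : R, 0 < y r₂ ∧ (ta.rule r₂).dst = (ta.rule t).src := by
          by_contra hno
          push_neg at hno
          have hIn : (∑ r' : R,
              (if (ta.rule r').dst = (ta.rule t).src then (y r' : ℤ) else 0)) = 0 := by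
            refine Finset.sum_eq_zero fun r' _ => ?_
            by_cases hdr : (ta.rule r').dst = (ta.rule t).src
            · rw [if_pos hdr]
              have : ¬ 0 < y r' := fun h => (hno r' h) hdr
              have : y r' = 0 := by omega
              rw [this]; rfl
            · rw [if_neg hdr]
          have hfl := hκflow ((ta.rule t).src)
          rw [hIn] at hfl
          have hσ'κ : (0 : ℤ) ≤ (σ'.κ ((ta.rule t).src) : ℤ) := Int.natCast_nonneg _
          have hone' : (σ.κ ((ta.rule t).src) : ℤ) = 1 := by exact_mod_cast hone
          linarith
        obtain ⟨r₂, hyr₂, hr₂d⟩ := hin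
        obtain ⟨c', hne', hpos', hhead', hch', hlast'⟩ := hchain r₂ hyr₂
        have hh' : (ta.rule (c'.head hne')).src ≠ (ta.rule t).src := by
          intro heq
          exact hnc ⟨c', hne', hpos', hch', heq, by rw [hlast', hr₂d]⟩
        have hccne : c' ++ c ≠ [] := by simp [hne']
        have hcc : List.Chain' (fun a b => (ta.rule a).dst = (ta.rule b).src) (c' ++ c) := by
          refine hch'.append hch ?_
          intro x hx b hb
          rw [List.getLast?_eq_getLast_of_ne_nil hne', Option.mem_some_iff] at hx
          rw [List.head?_eq_head hne, Option.mem_some_iff] at hb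
          subst hx
          subst hb
          rw [hlast', hr₂d]
          exact hheq.symm
        have hlcc : (c' ++ c).getLast hccne = r := by
          have h3 : (c' ++ c).getLast? = c.getLast? := List.getLast?_append_of_ne_nil _ hne
          rw [List.getLast?_eq_getLast_of_ne_nil hccne,
            List.getLast?_eq_getLast_of_ne_nil hne] at h3
          rw [Option.some_inj.1 h3, hlast]
        have hhcc : (c' ++ c).head hccne = c'.head hne' := List.head_append_of_ne_nil hne'
        have hccpos : ∀ r' ∈ c' ++ c, 0 < y r' := by
          intro r' hr'
          rcases List.mem_append.1 hr' with h | h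
          · exact hpos' r' h
          · exact hpos r' h
        by_cases hc' : ∀ r' ∈ c' ++ c, 0 < z r'
        · refine C1 (c' ++ c) hccne hc' hcc ?_ hlcc
          rw [hhcc]
          exact hpres _ hh' hhead'
        · obtain ⟨htm, hzt0⟩ := Cneg (c' ++ c) hccpos hc'
          exact C2 (c' ++ c) hccne hccpos hcc hlcc htm hzt0
    · obtain ⟨htm, hzt0⟩ := Cneg c hpos hc
      exact C2 c hne hpos hch hlast htm hzt0
  · -- the sum decreases
    have h1 : ∀ r ∈ Finset.univ, z r ≤ y r := by
      intro r _
      by_cases hrt : r = t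
      · subst hrt; omega
      · rw [hzne r hrt]
    exact Finset.sum_lt_sum h1 ⟨t, Finset.mem_univ t, by omega⟩
end

section
/- Let φ = C₁ ∧ … ∧ C_m be a 3-CNF formula over variables x₁, …, x_n and let TA_φ be its associated threshold automaton. Then φ is satisfiable if and only if there exist an initial configuration σ₀ of TA_φ and a schedule τ applicable to σ₀ such that τ(σ₀).κ(ℓ_F) > 0. -/
variable {L V P R : Type}

/-! ### The threshold automaton `TA_φ` associated with a 3-CNF formula `φ`

A 3-CNF formula over variables `x₁, …, x_n` with clauses `C₁, …, C_m` is given by a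
function `C : Fin m → Fin 3 → Fin n × Bool`, where `C j t = (i, b)` means that the `t`-th
literal of clause `j` is `x_i` (if `b = true`) or `¬x_i` (if `b = false`). -/

/-- Locations: `ℓ_i`, `⊤_i`, `⊥_i` (for `1 ≤ i ≤ n`), `ℓ_mid` and `ℓ_F`. -/
abbrev SatLoc (n : ℕ) := Fin n ⊕ Fin n ⊕ Fin n ⊕ Fin 2

def satStart {n : ℕ} (i : Fin n) : SatLoc n := Sum.inl i
def satTop {n : ℕ} (i : Fin n) : SatLoc n := Sum.inr (Sum.inl i)
def satBot {n : ℕ} (i : Fin n) : SatLoc n := Sum.inr (Sum.inr (Sum.inl i))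
def satMid {n : ℕ} : SatLoc n := Sum.inr (Sum.inr (Sum.inr 0))
def satFin {n : ℕ} : SatLoc n := Sum.inr (Sum.inr (Sum.inr 1))

/-- Rules: `(ℓ_i → ⊤_i)`, `(ℓ_i → ⊥_i)`, `(⊤_i → ℓ_mid)`, `(⊥_i → ℓ_mid)` and the final
rule `(ℓ_mid → ℓ_F)`. -/
abbrev SatRule (n : ℕ) := Fin n ⊕ Fin n ⊕ Fin n ⊕ Fin n ⊕ Unit

/-- A guard with constant threshold `x ⋈ a` (all parameter coefficients are `0`). -/
def constGuard {V P : Type} (isRise : Bool) (x : V) (a : ℚ) : TGuard V P :=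
  ⟨x, isRise, a, fun _ => 0⟩

/-- The update incrementing exactly the shared variable `x`. -/
def unitUpd {V : Type} [DecidableEq V] (x : V) : V → ℕ := fun v => if v = x then 1 else 0

theorem unitUpd_le_one {V : Type} [DecidableEq V] (x v : V) : unitUpd x v ≤ 1 := by
  unfold unitUpd; split <;> omega

/-- Satisfiability of the 3-CNF formula given by `C`. -/
def cnfSatisfiable {n m : ℕ} (C : Fin m → Fin 3 → Fin n × Bool) : Prop :=
  ∃ v : Fin n → Bool, ∀ j : Fin m, ∃ t : Fin 3, v (C j t).1 = (C j t).2

/-- Shared variables: `y_i`, `ȳ_i` (for `1 ≤ i ≤ n`) and `c_j` (for `1 ≤ j ≤ m`). -/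
abbrev SatVar (n m : ℕ) := Fin n ⊕ Fin n ⊕ Fin m

def varY {n m : ℕ} (i : Fin n) : SatVar n m := Sum.inl i
def varYbar {n m : ℕ} (i : Fin n) : SatVar n m := Sum.inr (Sum.inl i)
def varC {n m : ℕ} (j : Fin m) : SatVar n m := Sum.inr (Sum.inr j)

/-- The update incrementing `c_j` for every clause `C_j` containing the literal `(i, b)`. -/
def litUpd {n m : ℕ} (C : Fin m → Fin 3 → Fin n × Bool) (i : Fin n) (b : Bool) :
    SatVar n m → ℕ := fun v =>
  match v with
  | Sum.inr (Sum.inr j) => if ∃ t : Fin 3, C j t = (i, b) then 1 else 0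
  | _ => 0

theorem litUpd_le_one {n m : ℕ} (C : Fin m → Fin 3 → Fin n × Bool) (i : Fin n) (b : Bool)
    (v : SatVar n m) : litUpd C i b v ≤ 1 := by
  rcases v with i' | i' | j
  · simp [litUpd]
  · simp [litUpd]
  · simp only [litUpd]
    split <;> omega

/-- The rules of `TA_φ`. -/
def satRule {n m : ℕ} (C : Fin m → Fin 3 → Fin n × Bool) :
    SatRule n → TRule (SatLoc n) (SatVar n m) Unit
  | Sum.inl i =>
      ⟨satStart i, satTop i, [constGuard false (varYbar i) 1], unitUpd (varY i),
        fun v => unitUpd_le_one _ v⟩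
  | Sum.inr (Sum.inl i) =>
      ⟨satStart i, satBot i, [constGuard false (varY i) 1], unitUpd (varYbar i),
        fun v => unitUpd_le_one _ v⟩
  | Sum.inr (Sum.inr (Sum.inl i)) =>
      ⟨satTop i, satMid, [], litUpd C i true, fun v => litUpd_le_one C i true v⟩
  | Sum.inr (Sum.inr (Sum.inr (Sum.inl i))) =>
      ⟨satBot i, satMid, [], litUpd C i false, fun v => litUpd_le_one C i false v⟩
  | Sum.inr (Sum.inr (Sum.inr (Sum.inr _))) =>
      ⟨satMid, satFin, (List.finRange m).map fun j => constGuard true (varC j) 1,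
        fun _ => 0, fun _ => Nat.zero_le 1⟩

/-- The threshold automaton `TA_φ` associated with the 3-CNF formula `φ` given by `C`:
environment with a single parameter `k`, trivial resilience condition and `N(k) = k`;
initial locations `ℓ₁, …, ℓ_n`. -/
def satTA {n m : ℕ} (hn : 0 < n) (C : Fin m → Fin 3 → Fin n × Bool) :
    TA (SatLoc n) (SatVar n m) Unit (SatRule n) where
  initial := {ℓ | ∃ i : Fin n, ℓ = satStart i}
  initial_nonempty := ⟨satStart ⟨0, hn⟩, ⟨0, hn⟩, rfl⟩
  rc := Set.univ
  N := fun p => p ()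
  rule := satRule C

/-! From a satisfying assignment `v`, start one process in each `ℓ_i` and move it to `ℓ_mid`
through `⊤_i` or `⊥_i` as `v` dictates: every clause counter `c_j` becomes positive, so the
guard of `ℓ_mid → ℓ_F` holds.

Conversely, the fall guards make `y_i` and `ȳ_i` never both positive, a process can sit in `⊤_i`
(`⊥_i`) only once `y_i` (`ȳ_i`) is positive, and `c_j` is only raised by leaving the location
of a literal of `C_j`. Hence along every run each positive `c_j` has a literal of `C_j` whose
variable is positive, and once `ℓ_F` is covered all `c_j` are positive: reading `x_i := (y_i > 0)`
off that configuration satisfies every clause. -/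

namespace TA

variable {L V P R : Type} [DecidableEq L] (ta : TA L V P R)

theorem apply_append (σ : Config L V P) (τ₁ τ₂ : List R) :
    ta.apply σ (τ₁ ++ τ₂) = ta.apply (ta.apply σ τ₁) τ₂ := by
  induction τ₁ generalizing σ with
  | nil => rfl
  | cons r τ ih => exact ih _

theorem applicable_append [Fintype P] (σ : Config L V P) (τ₁ τ₂ : List R) :
    ta.applicable σ (τ₁ ++ τ₂) ↔
      ta.applicable σ τ₁ ∧ ta.applicable (ta.apply σ τ₁) τ₂ := by
  induction τ₁ generalizing σ with
  | nil => simp [applicable, apply]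
  | cons r τ ih => simp [applicable, apply, ih, and_assoc]

theorem le_apply_g (σ : Config L V P) (τ : List R) (w : V) :
    σ.g w ≤ (ta.apply σ τ).g w := by
  induction τ generalizing σ with
  | nil => exact le_rfl
  | cons r τ ih => exact (Nat.le_add_right _ _).trans (ih ((ta.rule r).fire σ))

theorem apply_of_invariant [Fintype P] (Inv : Config L V P → Prop)
    (hstep : ∀ r σ, Inv σ → (ta.rule r).enabledAt σ → Inv ((ta.rule r).fire σ))
    {σ : Config L V P} {τ : List R} (hσ : Inv σ) (hτ : ta.applicable σ τ) :
    Inv (ta.apply σ τ) := by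
  induction τ generalizing σ with
  | nil => exact hσ
  | cons r τ ih => exact ih (hstep r σ hσ hτ.1) hτ.2

end TA

namespace TRule

variable {L V P : Type} [DecidableEq L] (r : TRule L V P) (σ : Config L V P)

@[simp]
theorem fire_g (w : V) : (r.fire σ).g w = σ.g w + r.upd w := rfl

theorem le_fire_g (w : V) : σ.g w ≤ (r.fire σ).g w := Nat.le_add_right _ _

theorem fire_κ_le {ℓ : L} (hd : ℓ ≠ r.dst) : (r.fire σ).κ ℓ ≤ σ.κ ℓ := by
  simp only [fire, hd, if_false]
  omega

theorem fire_κ_dst (h : r.src ≠ r.dst) : (r.fire σ).κ r.dst = σ.κ r.dst + 1 := by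
  simp [fire, Ne.symm h]

end TRule

section ConstGuard

variable {V P : Type} [Fintype P] (x : V) (g : V → ℕ) (p : P → ℕ)

theorem constGuard_false_one_holds_iff :
    (constGuard false x 1 : TGuard V P).holds g p ↔ g x = 0 := by
  simp [constGuard, TGuard.holds, Nat.cast_lt_one]

theorem constGuard_true_one_holds_iff :
    (constGuard true x 1 : TGuard V P).holds g p ↔ 0 < g x := by
  simp [constGuard, TGuard.holds, Nat.one_le_cast, Nat.one_le_iff_ne_zero, Nat.pos_iff_ne_zero]

end ConstGuard

section SatTA

variable {n m : ℕ}

/-- The location `⊤_i` of the literal `x_i` and `⊥_i` of `¬x_i`; `litVar` likewise picks `y_i`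
or `ȳ_i`. -/
def litLoc (i : Fin n) (b : Bool) : SatLoc n := bif b then satTop i else satBot i

def litVar (i : Fin n) (b : Bool) : SatVar n m := bif b then varY i else varYbar i

def enterRule (i : Fin n) (b : Bool) : SatRule n := bif b then Sum.inl i else Sum.inr (Sum.inl i)

def leaveRule (i : Fin n) (b : Bool) : SatRule n :=
  bif b then Sum.inr (Sum.inr (Sum.inl i)) else Sum.inr (Sum.inr (Sum.inr (Sum.inl i)))

def finalRule : SatRule n := Sum.inr (Sum.inr (Sum.inr (Sum.inr ())))

@[simp]
theorem litLoc_inj {i i' : Fin n} {b b' : Bool} :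
    litLoc i b = litLoc i' b' ↔ i = i' ∧ b = b' := by
  cases b <;> cases b' <;> simp [litLoc, satTop, satBot]

@[simp]
theorem satStart_inj {i i' : Fin n} : satStart i = satStart i' ↔ i = i' := by
  simp [satStart]

@[simp]
theorem litLoc_ne_satStart (i i' : Fin n) (b : Bool) : litLoc i b ≠ satStart i' := by
  cases b <;> simp [litLoc, satTop, satBot, satStart]

@[simp]
theorem litLoc_ne_satMid (i : Fin n) (b : Bool) : litLoc i b ≠ satMid := by
  cases b <;> simp [litLoc, satTop, satBot, satMid]

@[simp]
theorem litLoc_ne_satFin (i : Fin n) (b : Bool) : litLoc i b ≠ satFin := by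
  cases b <;> simp [litLoc, satTop, satBot, satFin]

@[simp]
theorem satStart_ne_satMid (i : Fin n) : satStart i ≠ satMid := by
  simp [satStart, satMid]

@[simp]
theorem satStart_ne_satFin (i : Fin n) : satStart i ≠ satFin := by
  simp [satStart, satFin]

@[simp]
theorem satMid_ne_satFin : (satMid : SatLoc n) ≠ satFin := by
  simp [satMid, satFin]

@[simp]
theorem satStart_ne_litLoc (i i' : Fin n) (b : Bool) : satStart i' ≠ litLoc i b :=
  (litLoc_ne_satStart i i' b).symm

@[simp]
theorem satMid_ne_litLoc (i : Fin n) (b : Bool) : satMid ≠ litLoc i b :=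
  (litLoc_ne_satMid i b).symm

@[simp]
theorem satFin_ne_litLoc (i : Fin n) (b : Bool) : satFin ≠ litLoc i b :=
  (litLoc_ne_satFin i b).symm

@[simp]
theorem satFin_ne_satMid : (satFin : SatLoc n) ≠ satMid :=
  satMid_ne_satFin.symm

@[simp]
theorem satMid_ne_satStart (i : Fin n) : satMid ≠ satStart i :=
  (satStart_ne_satMid i).symm

@[simp]
theorem litVar_inj {i i' : Fin n} {b b' : Bool} :
    (litVar i b : SatVar n m) = litVar i' b' ↔ i = i' ∧ b = b' := by
  cases b <;> cases b' <;> simp [litVar, varY, varYbar]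

@[simp]
theorem varC_ne_litVar (j : Fin m) (i : Fin n) (b : Bool) : varC j ≠ litVar i b := by
  cases b <;> simp [litVar, varY, varYbar, varC]

variable (C : Fin m → Fin 3 → Fin n × Bool)

@[simp]
theorem litUpd_litVar (i i' : Fin n) (b b' : Bool) : litUpd C i b (litVar i' b') = 0 := by
  cases b' <;> rfl

@[simp]
theorem litUpd_varC (i : Fin n) (b : Bool) (j : Fin m) :
    litUpd C i b (varC j) = if ∃ t, C j t = (i, b) then 1 else 0 := rfl

@[simp]
theorem satRule_enterRule (i : Fin n) (b : Bool) :
    satRule C (enterRule i b) = ⟨satStart i, litLoc i b, [constGuard false (litVar i !b) 1],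
      unitUpd (litVar i b), unitUpd_le_one _⟩ := by
  cases b <;> rfl

@[simp]
theorem satRule_leaveRule (i : Fin n) (b : Bool) :
    satRule C (leaveRule i b) =
      ⟨litLoc i b, satMid, [], litUpd C i b, litUpd_le_one C i b⟩ := by
  cases b <;> rfl

@[simp]
theorem satRule_finalRule :
    satRule C finalRule =
      ⟨satMid, satFin, (List.finRange m).map fun j => constGuard true (varC j) 1,
        fun _ => 0, fun _ => Nat.zero_le 1⟩ := rfl

@[simp]
theorem satTA_rule (hn : 0 < n) : (satTA hn C).rule = satRule C := rfl

theorem satRule_cases (r : SatRule n) :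
    (∃ i b, r = enterRule i b) ∨ (∃ i b, r = leaveRule i b) ∨ r = finalRule := by
  rcases r with i | i | i | i | ⟨⟩
  exacts [.inl ⟨i, true, rfl⟩, .inl ⟨i, false, rfl⟩, .inr (.inl ⟨i, true, rfl⟩),
    .inr (.inl ⟨i, false, rfl⟩), .inr (.inr rfl)]

variable {C} {σ : Config (SatLoc n) (SatVar n m) Unit} {i : Fin n} {b : Bool}

theorem enterRule_enabledAt_iff :
    (satRule C (enterRule i b)).enabledAt σ ↔
      0 < σ.κ (satStart i) ∧ σ.g (litVar i !b) = 0 := by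
  simp [TRule.enabledAt, constGuard_false_one_holds_iff]

theorem leaveRule_enabledAt_iff :
    (satRule C (leaveRule i b)).enabledAt σ ↔ 0 < σ.κ (litLoc i b) := by
  simp [TRule.enabledAt]

theorem finalRule_enabledAt_iff :
    (satRule C finalRule).enabledAt σ ↔ 0 < σ.κ satMid ∧ ∀ j, 0 < σ.g (varC j) := by
  simp [TRule.enabledAt, constGuard_true_one_holds_iff]

end SatTA

section Invariant

variable {n m : ℕ} (C : Fin m → Fin 3 → Fin n × Bool)

structure SatInv (σ : Config (SatLoc n) (SatVar n m) Unit) : Prop where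
  lit_pos_of_occupied : ∀ i b, 0 < σ.κ (litLoc i b) → 0 < σ.g (litVar i b)
  exists_lit_eq_zero : ∀ i, ∃ b, σ.g (litVar i b) = 0
  exists_lit_pos_of_clause_pos :
    ∀ j, 0 < σ.g (varC j) → ∃ t, 0 < σ.g (litVar (C j t).1 (C j t).2)
  clause_pos_of_fin_pos : 0 < σ.κ satFin → ∀ j, 0 < σ.g (varC j)

variable {C} {σ : Config (SatLoc n) (SatVar n m) Unit}

namespace SatInv

theorem fire_enterRule (h : SatInv C σ) {i : Fin n} {b : Bool}
    (hen : (satRule C (enterRule i b)).enabledAt σ) :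
    SatInv C ((satRule C (enterRule i b)).fire σ) := by
  rw [enterRule_enabledAt_iff] at hen
  have hg := TRule.le_fire_g (satRule C (enterRule i b)) σ
  constructor
  · intro i' b' hκ
    by_cases hib : i' = i ∧ b' = b
    · obtain ⟨rfl, rfl⟩ := hib
      simp [unitUpd]
    · refine (h.lit_pos_of_occupied i' b' (hκ.trans_le (TRule.fire_κ_le _ _ ?_))).trans_le (hg _)
      simpa using hib
  · intro i'
    by_cases hi : i' = i
    · subst hi
      exact ⟨!b, by simp [unitUpd, hen.2]⟩
    · obtain ⟨b', hb'⟩ := h.exists_lit_eq_zero i'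
      exact ⟨b', by simp [unitUpd, hi, hb']⟩
  · intro j hj
    obtain ⟨t, ht⟩ := h.exists_lit_pos_of_clause_pos j (by simpa [unitUpd] using hj)
    exact ⟨t, ht.trans_le (hg _)⟩
  · intro hF j
    refine (h.clause_pos_of_fin_pos (hF.trans_le (TRule.fire_κ_le _ _ ?_)) j).trans_le (hg _)
    simp

theorem fire_leaveRule (h : SatInv C σ) {i : Fin n} {b : Bool}
    (hen : (satRule C (leaveRule i b)).enabledAt σ) :
    SatInv C ((satRule C (leaveRule i b)).fire σ) := by
  rw [leaveRule_enabledAt_iff] at hen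
  have hg := TRule.le_fire_g (satRule C (leaveRule i b)) σ
  constructor
  · intro i' b' hκ
    refine (h.lit_pos_of_occupied i' b' (hκ.trans_le (TRule.fire_κ_le _ _ ?_))).trans_le (hg _)
    simp
  · simpa using h.exists_lit_eq_zero
  · intro j hj
    by_cases hlit : ∃ t, C j t = (i, b)
    · obtain ⟨t, ht⟩ := hlit
      refine ⟨t, ?_⟩
      simpa [ht] using h.lit_pos_of_occupied i b hen
    · obtain ⟨t, ht⟩ := h.exists_lit_pos_of_clause_pos j (by simpa [hlit] using hj)
      exact ⟨t, ht.trans_le (hg _)⟩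
  · intro hF j
    refine (h.clause_pos_of_fin_pos (hF.trans_le (TRule.fire_κ_le _ _ ?_)) j).trans_le (hg _)
    simp

theorem fire_finalRule (h : SatInv C σ) (hen : (satRule C finalRule).enabledAt σ) :
    SatInv C ((satRule C finalRule).fire σ) := by
  rw [finalRule_enabledAt_iff] at hen
  constructor
  · intro i b hκ
    simpa using h.lit_pos_of_occupied i b (hκ.trans_le (TRule.fire_κ_le _ _ (by simp)))
  · simpa using h.exists_lit_eq_zero
  · simpa using h.exists_lit_pos_of_clause_pos
  · simpa using fun _ => hen.2

theorem fire (h : SatInv C σ) (r : SatRule n) (hen : (satRule C r).enabledAt σ) :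
    SatInv C ((satRule C r).fire σ) := by
  rcases satRule_cases r with ⟨i, b, rfl⟩ | ⟨i, b, rfl⟩ | rfl
  exacts [h.fire_enterRule hen, h.fire_leaveRule hen, h.fire_finalRule hen]

theorem of_isInitial (hn : 0 < n) (h : (satTA hn C).isInitial σ) : SatInv C σ := by
  obtain ⟨-, hκ, hg⟩ := h
  have hκ' : ∀ ℓ, (∀ i, ℓ ≠ satStart i) → σ.κ ℓ = 0 := fun ℓ hℓ =>
    hκ ℓ fun ⟨i, hi⟩ => hℓ i hi
  constructor
  · simp [hκ' _ (litLoc_ne_satStart _ · _)]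
  · simp [hg]
  · simp [hg]
  · simp [hκ' satFin fun i => (satStart_ne_satFin i).symm]

theorem cnfSatisfiable (h : SatInv C σ) (hF : 0 < σ.κ satFin) : cnfSatisfiable C := by
  let v i := decide (0 < σ.g (litVar i true))
  have hv : ∀ i b, 0 < σ.g (litVar i b) → v i = b := by
    intro i b hb
    obtain ⟨b', hb'⟩ := h.exists_lit_eq_zero i
    cases b <;> cases b' <;> simp only [v, decide_eq_true_eq, decide_eq_false_iff_not] <;> omega
  refine ⟨v, fun j => ?_⟩
  obtain ⟨t, ht⟩ := h.exists_lit_pos_of_clause_pos j (h.clause_pos_of_fin_pos hF j)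
  exact ⟨t, hv _ _ ht⟩

end SatInv

end Invariant

section Schedule

variable {n m : ℕ} (hn : 0 < n) (C : Fin m → Fin 3 → Fin n × Bool)

def passRules (i : Fin n) (b : Bool) : List (SatRule n) := [enterRule i b, leaveRule i b]

variable {σ : Config (SatLoc n) (SatVar n m) Unit} {i : Fin n} {b : Bool}

theorem applicable_passRules (hκ : 0 < σ.κ (satStart i)) (hg : σ.g (litVar i !b) = 0) :
    (satTA hn C).applicable σ (passRules i b) := by
  refine ⟨enterRule_enabledAt_iff.2 ⟨hκ, hg⟩, leaveRule_enabledAt_iff.2 ?_, trivial⟩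
  have := TRule.fire_κ_dst (satRule C (enterRule i b)) σ (by simp)
  simp only [satTA_rule, satRule_enterRule] at this ⊢
  omega

theorem apply_passRules_κ_satStart {i' : Fin n} (hi : i' ≠ i) :
    ((satTA hn C).apply σ (passRules i b)).κ (satStart i') = σ.κ (satStart i') := by
  simp [passRules, TA.apply, TRule.fire, hi]

theorem apply_passRules_κ_satMid :
    ((satTA hn C).apply σ (passRules i b)).κ satMid = σ.κ satMid + 1 := by
  simp [passRules, TA.apply, TRule.fire]

theorem apply_passRules_g (w : SatVar n m) :
    ((satTA hn C).apply σ (passRules i b)).g w =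
      σ.g w + unitUpd (litVar i b) w + litUpd C i b w := by
  simp [passRules, TA.apply]

theorem flatMap_passRules_spec (v : Fin n → Bool) (s : List (Fin n)) (hs : s.Nodup)
    (σ : Config (SatLoc n) (SatVar n m) Unit) (hκ : ∀ i ∈ s, 0 < σ.κ (satStart i))
    (hg : ∀ i, σ.g (litVar i !(v i)) = 0) :
    (satTA hn C).applicable σ (s.flatMap fun i => passRules i (v i)) ∧
    σ.κ satMid + s.length ≤
      ((satTA hn C).apply σ (s.flatMap fun i => passRules i (v i))).κ satMid ∧
    ∀ j, ∀ i ∈ s, ∀ t, C j t = (i, v i) →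
      0 < ((satTA hn C).apply σ (s.flatMap fun i => passRules i (v i))).g (varC j) := by
  induction s generalizing σ with
  | nil => simp [TA.applicable, TA.apply]
  | cons i s ih =>
    obtain ⟨his, hs⟩ := List.nodup_cons.1 hs
    simp only [List.flatMap_cons, TA.apply_append, TA.applicable_append, List.length_cons]
    have happ₂ := applicable_passRules hn C (hκ i (List.mem_cons_self ..)) (hg i)
    have hmid₂ := apply_passRules_κ_satMid hn C (σ := σ) (i := i) (b := v i)
    have hκ₂ : ∀ i' ∈ s, 0 < ((satTA hn C).apply σ (passRules i (v i))).κ (satStart i') :=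
      fun i' hi' => by
        rw [apply_passRules_κ_satStart hn C (ne_of_mem_of_not_mem hi' his)]
        exact hκ i' (List.mem_cons_of_mem i hi')
    have hg₂ : ∀ i', ((satTA hn C).apply σ (passRules i (v i))).g (litVar i' !(v i')) = 0 :=
      fun i' => by by_cases hi : i' = i <;> simp [apply_passRules_g, unitUpd, hg, hi]
    have hclause₂ : ∀ j t, C j t = (i, v i) →
        0 < ((satTA hn C).apply σ (passRules i (v i))).g (varC j) := fun j t ht => by
      simp [apply_passRules_g, unitUpd, show ∃ t, C j t = (i, v i) from ⟨t, ht⟩]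
    generalize (satTA hn C).apply σ (passRules i (v i)) = σ₂ at *
    obtain ⟨happ, hmid, hclause⟩ := ih hs σ₂ hκ₂ hg₂
    refine ⟨⟨happ₂, happ⟩, by omega, ?_⟩
    rintro j i' hi' t ht
    rcases List.mem_cons.1 hi' with rfl | hi'
    · exact (hclause₂ j t ht).trans_le (TA.le_apply_g _ _ _ _)
    · exact hclause j i' hi' t ht

def satInitConfig (n m : ℕ) : Config (SatLoc n) (SatVar n m) Unit :=
  ⟨Sum.elim (fun _ => 1) (fun _ => 0), fun _ => 0, fun _ => n⟩

theorem isInitial_satInitConfig : (satTA hn C).isInitial (satInitConfig n m) := by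
  refine ⟨⟨Set.mem_univ _, by simp [satInitConfig, satTA, Fintype.sum_sum_type]⟩, ?_,
    fun _ => rfl⟩
  rintro (i | ℓ) hℓ
  · exact absurd ⟨i, rfl⟩ hℓ
  · rfl

theorem exists_covering_schedule (v : Fin n → Bool) (hv : ∀ j, ∃ t, v (C j t).1 = (C j t).2) :
    ∃ τ, (satTA hn C).applicable (satInitConfig n m) τ ∧
      0 < ((satTA hn C).apply (satInitConfig n m) τ).κ satFin := by
  obtain ⟨happ, hmid, hclause⟩ := flatMap_passRules_spec hn C v (List.finRange n)
    (List.nodup_finRange n) (satInitConfig n m) (fun i _ => Nat.one_pos) (fun i => rfl)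
  refine ⟨(List.finRange n).flatMap (fun i => passRules i (v i)) ++ [finalRule], ?_⟩
  rw [TA.applicable_append, TA.apply_append]
  generalize (satTA hn C).apply (satInitConfig n m) _ = σ at *
  have hen : (satRule C finalRule).enabledAt σ := by
    refine finalRule_enabledAt_iff.2 ⟨?_, fun j => ?_⟩
    · simp only [List.length_finRange] at hmid
      omega
    · obtain ⟨t, ht⟩ := hv j
      exact hclause j _ (List.mem_finRange _) t (Prod.ext rfl ht.symm)
  refine ⟨⟨happ, hen, trivial⟩, ?_⟩
  have hfire := TRule.fire_κ_dst (satRule C finalRule) σ (by simp)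
  simp only [satRule_finalRule] at hfire
  simp only [TA.apply, satTA_rule, satRule_finalRule, hfire]
  omega

end Schedule

/-- A 3-CNF formula `φ` is satisfiable if and only if there are an initial configuration
`σ₀` of `TA_φ` and a schedule `τ` applicable to `σ₀` such that `τ(σ₀)` covers `ℓ_F`. -/
theorem cnf_satisfiable_iff_coverable {n m : ℕ} (hn : 0 < n)
    (C : Fin m → Fin 3 → Fin n × Bool) :
    cnfSatisfiable C ↔
    ∃ (σ₀ : Config (SatLoc n) (SatVar n m) Unit) (τ : List (SatRule n)),
      (satTA hn C).isInitial σ₀ ∧ (satTA hn C).applicable σ₀ τ ∧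
      0 < ((satTA hn C).apply σ₀ τ).κ satFin := by
  constructor
  · rintro ⟨v, hv⟩
    obtain ⟨τ, happ, hF⟩ := exists_covering_schedule hn C v hv
    exact ⟨_, τ, isInitial_satInitConfig hn C, happ, hF⟩
  · rintro ⟨σ₀, τ, hinit, happ, hF⟩
    have hinv : SatInv C ((satTA hn C).apply σ₀ τ) :=
      TA.apply_of_invariant _ _ (fun r _ h hen => h.fire r hen) (.of_isInitial hn hinit) happ
    exact hinv.cnfSatisfiable hF
end

section
/- Let φ be a 3-CNF formula over variables x₁, …, x_n and let TA_φ be its associated threshold automaton. For every initial configuration σ₀ of TA_φ, every schedule τ applicable to σ₀, and every 1 ≤ i ≤ n: if some configuration visited by the path from σ₀ along τ has κ(⊤_i) ≥ 1, then every configuration visited by this path has κ(⊥_i) = 0; and symmetrically, if some visited configuration has κ(⊥_i) ≥ 1, then every visited configuration has κ(⊤_i) = 0. -/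
variable {L V P R : Type}

namespace SatAux

variable {n m : ℕ}

/-- Key invariant: `κ(⊤_i) ≤ y_i`, `κ(⊥_i) ≤ ȳ_i`, and `y_i`, `ȳ_i` are never both positive. -/
def Inv (σ : Config (SatLoc n) (SatVar n m) Unit) : Prop :=
  ∀ i : Fin n, σ.κ (satTop i) ≤ σ.g (varY i) ∧ σ.κ (satBot i) ≤ σ.g (varYbar i) ∧
    ¬(1 ≤ σ.g (varY i) ∧ 1 ≤ σ.g (varYbar i))

lemma guard_zero {σ : Config (SatLoc n) (SatVar n m) Unit} {v : SatVar n m}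
    (h : (constGuard false v 1 : TGuard (SatVar n m) Unit).holds σ.g σ.p) : σ.g v = 0 := by
  simp only [TGuard.holds, constGuard, if_neg (by simp : ¬ (false = true))] at h
  simp only [zero_mul, Finset.sum_const_zero, add_zero] at h
  exact_mod_cast Nat.lt_one_iff.mp (by exact_mod_cast h)

lemma fire_preserves (C : Fin m → Fin 3 → Fin n × Bool)
    (r : SatRule n) (σ : Config (SatLoc n) (SatVar n m) Unit)
    (hen : (satRule C r).enabledAt σ) (hI : Inv σ) : Inv ((satRule C r).fire σ) := by
  intro i
  obtain ⟨h1, h2, h3⟩ := hI i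
  rcases r with i' | i' | i' | i' | u
  · -- ℓ_{i'} → ⊤_{i'}, increments y_{i'}, requires ȳ_{i'} = 0
    have hg : σ.g (varYbar i') = 0 :=
      guard_zero (hen.2 _ (by simp [satRule]))
    by_cases hii : i = i'
    · subst hii
      simp only [TRule.fire, satRule, satTop, satBot, satStart, varY, varYbar, unitUpd] at *
      simp_all
    · have hii' : i' ≠ i := fun h => hii h.symm
      simp only [TRule.fire, satRule, satTop, satBot, satStart, varY, varYbar, unitUpd] at *
      simp_all
  · -- ℓ_{i'} → ⊥_{i'}
    have hg : σ.g (varY i') = 0 :=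
      guard_zero (hen.2 _ (by simp [satRule]))
    by_cases hii : i = i'
    · subst hii
      simp only [TRule.fire, satRule, satTop, satBot, satStart, varY, varYbar, unitUpd] at *
      simp_all
    · have hii' : i' ≠ i := fun h => hii h.symm
      simp only [TRule.fire, satRule, satTop, satBot, satStart, varY, varYbar, unitUpd] at *
      simp_all
  · -- ⊤_{i'} → ℓ_mid
    simp only [TRule.fire, satRule, satTop, satBot, satStart, satMid, varY, varYbar,
      litUpd] at *
    simp_all <;> (try constructor) <;> (try split) <;> omega
  · -- ⊥_{i'} → ℓ_mid
    simp only [TRule.fire, satRule, satTop, satBot, satStart, satMid, varY, varYbar,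
      litUpd] at *
    simp_all <;> (try constructor) <;> (try split) <;> omega
  · -- ℓ_mid → ℓ_F
    simp only [TRule.fire, satRule, satTop, satBot, satStart, satMid, satFin, varY, varYbar] at *
    simp_all

lemma inv_visited {hn : 0 < n} (C : Fin m → Fin 3 → Fin n × Bool)
    (σ : Config (SatLoc n) (SatVar n m) Unit) (hI : Inv σ)
    (τ : List (SatRule n)) (happ : (satTA hn C).applicable σ τ) :
    ∀ σ' ∈ (satTA hn C).visited σ τ, Inv σ' := by
  induction τ generalizing σ with
  | nil => intro σ' hσ'; simp [TA.visited] at hσ'; subst hσ'; exact hI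
  | cons r τ ih =>
    intro σ' hσ'
    simp only [TA.visited, List.mem_cons] at hσ'
    rcases hσ' with rfl | hσ'
    · exact hI
    · exact ih _ (fire_preserves C r σ happ.1 hI) happ.2 _ hσ'

lemma g_le_apply {hn : 0 < n} (C : Fin m → Fin 3 → Fin n × Bool)
    (σ : Config (SatLoc n) (SatVar n m) Unit) (τ : List (SatRule n)) (v : SatVar n m) :
    σ.g v ≤ ((satTA hn C).apply σ τ).g v := by
  induction τ generalizing σ with
  | nil => simp [TA.apply]
  | cons r τ ih =>
    calc σ.g v ≤ ((satRule C r).fire σ).g v := Nat.le_add_right _ _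
    _ ≤ _ := ih _

lemma visited_g_le_apply {hn : 0 < n} (C : Fin m → Fin 3 → Fin n × Bool)
    (σ : Config (SatLoc n) (SatVar n m) Unit) (τ : List (SatRule n)) (v : SatVar n m) :
    ∀ σ' ∈ (satTA hn C).visited σ τ, σ'.g v ≤ ((satTA hn C).apply σ τ).g v := by
  induction τ generalizing σ with
  | nil => intro σ' hσ'; simp [TA.visited] at hσ'; subst hσ'; simp [TA.apply]
  | cons r τ ih =>
    intro σ' hσ'
    simp only [TA.visited, List.mem_cons] at hσ'
    rcases hσ' with rfl | hσ'
    · simp only [TA.apply]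
      exact le_trans (show σ'.g v ≤ (((satTA hn C).rule r).fire σ').g v from
        Nat.le_add_right _ _) (g_le_apply C _ τ v)
    · exact ih _ _ hσ'

lemma apply_mem_visited {hn : 0 < n} (C : Fin m → Fin 3 → Fin n × Bool)
    (σ : Config (SatLoc n) (SatVar n m) Unit) (τ : List (SatRule n)) :
    (satTA hn C).apply σ τ ∈ (satTA hn C).visited σ τ := by
  induction τ generalizing σ with
  | nil => simp [TA.apply, TA.visited]
  | cons r τ ih => simp only [TA.apply, TA.visited, List.mem_cons]; exact Or.inr (ih _)

end SatAux

/-- In `TA_φ`, if some configuration visited by a path from an initial configuration has a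
process in `⊤_i`, then no configuration visited by that path ever has a process in `⊥_i`,
and symmetrically. -/
theorem satTA_top_bot_exclusive {n m : ℕ} (hn : 0 < n)
    (C : Fin m → Fin 3 → Fin n × Bool)
    (σ₀ : Config (SatLoc n) (SatVar n m) Unit) (h0 : (satTA hn C).isInitial σ₀)
    (τ : List (SatRule n)) (happ : (satTA hn C).applicable σ₀ τ) (i : Fin n) :
    ((∃ σ ∈ (satTA hn C).visited σ₀ τ, 1 ≤ σ.κ (satTop i)) →
      ∀ σ' ∈ (satTA hn C).visited σ₀ τ, σ'.κ (satBot i) = 0) ∧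
    ((∃ σ ∈ (satTA hn C).visited σ₀ τ, 1 ≤ σ.κ (satBot i)) →
      ∀ σ' ∈ (satTA hn C).visited σ₀ τ, σ'.κ (satTop i) = 0) := by
  have hI0 : SatAux.Inv σ₀ := by
    intro j
    have hg := h0.2.2
    have hκT : σ₀.κ (satTop j) = 0 := h0.2.1 _ (by
      rintro ⟨i', hi'⟩; simp [satTA, satTop, satStart] at hi')
    have hκB : σ₀.κ (satBot j) = 0 := h0.2.1 _ (by
      rintro ⟨i', hi'⟩; simp [satTA, satBot, satStart] at hi')
    simp [hκT, hκB, hg]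
  have hInv := SatAux.inv_visited C σ₀ hI0 τ happ
  have key : ∀ σ ∈ (satTA hn C).visited σ₀ τ, ∀ σ' ∈ (satTA hn C).visited σ₀ τ,
      1 ≤ σ.κ (satTop i) → 1 ≤ σ'.κ (satBot i) → False := by
    intro σ hσ σ' hσ' hT hB
    have hy : 1 ≤ σ.g (varY i) := le_trans hT (hInv σ hσ i).1
    have hyb : 1 ≤ σ'.g (varYbar i) := le_trans hB (hInv σ' hσ' i).2.1
    set σf := (satTA hn C).apply σ₀ τ with hσf
    have hfy : 1 ≤ σf.g (varY i) :=
      le_trans hy (SatAux.visited_g_le_apply C σ₀ τ _ σ hσ)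
    have hfyb : 1 ≤ σf.g (varYbar i) :=
      le_trans hyb (SatAux.visited_g_le_apply C σ₀ τ _ σ' hσ')
    exact (hInv σf (SatAux.apply_mem_visited C σ₀ τ) i).2.2 ⟨hfy, hfyb⟩
  constructor
  · rintro ⟨σ, hσ, hT⟩ σ' hσ'
    by_contra h
    exact key σ hσ σ' hσ' hT (by omega)
  · rintro ⟨σ, hσ, hB⟩ σ' hσ'
    by_contra h
    exact key σ' hσ' σ hσ (by omega) hB
end
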